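/- arXiv:2306.09865 — 9 statements merged into one kernel-verified Lean document; each statement's English description precedes it below -/
import Mathlib

section
/- Let X be a symmetric n×n real matrix with all entries in {0,1} and let r be a nonnegative integer. The following statements are equivalent: (i) X is PSD and rank(X) = r; (ii) there exist a permutation matrix Q, positive integers n₁,…,n_r and a nonnegative integer n_z with n₁+⋯+n_r+n_z = n such that QXQᵀ is the block-diagonal matrix J_{n₁} ⊕ ⋯ ⊕ J_{n_r} ⊕ 0_{n_z×n_z} (all-ones diagonal blocks followed by a zero block); (iii) rank(X) = r and X satisfies the triangle inequalities X_{ij} ≤ X_{ii} for all i ≠ j and X_{ij} + X_{ik} − X_{jk} ≤ X_{ii} for all j < k with i ∉ {j,k}; (iv) for every nonnegative real t, the matrix tX − diag(X)diag(X)ᵀ is PSD if and only if t ≥ r. -/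
open Matrix

/-- A real matrix is a permutation matrix if its entries are in `{0,1}` and
every row and every column sums to `1`. -/
def IsPermMatrix {n : ℕ} (Q : Matrix (Fin n) (Fin n) ℝ) : Prop :=
  (∀ i j, Q i j = 0 ∨ Q i j = 1) ∧ (∀ i, ∑ j, Q i j = 1) ∧ (∀ j, ∑ i, Q i j = 1)

/-- The starting position (offset) of the `i`-th diagonal block, when the blocks
have sizes `ns 0, ns 1, …` laid out consecutively from the top-left corner. -/
def blockOffset {r : ℕ} (ns : Fin r → ℕ) (i : Fin r) : ℕ :=
  ∑ j ∈ Finset.Iio i, ns j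

/-- The block-diagonal matrix `J_{n₁} ⊕ ⋯ ⊕ J_{n_r} ⊕ 0_{n_z × n_z}` of order `n`
(all-ones diagonal blocks of sizes `ns 0, …, ns (r-1)` followed by a zero block):
the `(a,b)` entry is `1` iff `a` and `b` lie in the same all-ones diagonal block. -/
def blockOnes (n r : ℕ) (ns : Fin r → ℕ) : Matrix (Fin n) (Fin n) ℝ :=
  Matrix.of fun a b => ∑ i : Fin r,
    if blockOffset ns i ≤ (a : ℕ) ∧ (a : ℕ) < blockOffset ns i + ns i ∧
       blockOffset ns i ≤ (b : ℕ) ∧ (b : ℕ) < blockOffset ns i + ns i then (1 : ℝ) else 0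


variable {n : ℕ}

lemma sum_ind (r p q : ℕ) :
    (∑ i : Fin r, if p = (i : ℕ) ∧ q = (i : ℕ) then (1:ℝ) else 0)
      = if p = q ∧ p < r then 1 else 0 := by
  rw [Fin.sum_univ_eq_sum_range (fun j => if p = j ∧ q = j then (1:ℝ) else 0)]
  by_cases hpq : p = q
  · subst hpq
    simp only [and_self]
    rw [Finset.sum_ite_eq (Finset.range r) p (fun _ => (1:ℝ))]
    simp
  · rw [Finset.sum_eq_zero, if_neg (by tauto)]
    intro j hj
    rw [if_neg]
    rintro ⟨h1, h2⟩; exact hpq (h1.trans h2.symm)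

lemma sum_Iio_val {r : ℕ} (m : ℕ → ℕ) (i : Fin r) :
    ∑ j ∈ Finset.Iio i, m (j:ℕ) = ∑ c ∈ Finset.range (i:ℕ), m c := by
  refine Finset.sum_nbij' (fun j => (j : ℕ)) (fun c => if h : c < r then (⟨c, h⟩ : Fin r) else i)
    ?_ ?_ ?_ ?_ ?_
  · intro a ha
    exact Finset.mem_range.mpr (Fin.lt_def.mp (Finset.mem_Iio.mp ha))
  · intro c hc
    have hcr : c < r := lt_trans (Finset.mem_range.mp hc) i.isLt
    rw [dif_pos hcr]
    exact Finset.mem_Iio.mpr (Finset.mem_range.mp hc)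
  · intro a _
    rw [dif_pos a.isLt]
  · intro c hc
    have hcr : c < r := lt_trans (Finset.mem_range.mp hc) i.isLt
    rw [dif_pos hcr]
  · intros; rfl
def IsCliqueM {n : ℕ} (X : Matrix (Fin n) (Fin n) ℝ) : Prop :=
  (∀ i j, X i j = 1 → X i i = 1) ∧ (∀ i j k, X i j = 1 → X j k = 1 → X i k = 1)

def IsCS {n : ℕ} (X : Matrix (Fin n) (Fin n) ℝ) (r : ℕ) (key : Fin n → ℕ) : Prop :=
  (∀ i, i < r → ∃ u, key u = i) ∧
  (∀ u v, X u v = if key u = key v ∧ key u < r then 1 else 0)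

section CS
variable {n : ℕ} {X : Matrix (Fin n) (Fin n) ℝ} {r : ℕ} {key : Fin n → ℕ}

/-- the indicator matrix of the classes -/
noncomputable def csA (r : ℕ) (key : Fin n → ℕ) : Matrix (Fin n) (Fin r) ℝ :=
  Matrix.of fun u i => if key u = (i : ℕ) then 1 else 0

lemma cs_factor (hcs : IsCS X r key) : X = csA r key * (csA r key)ᵀ := by
  ext u v
  rw [hcs.2 u v]
  rw [Matrix.mul_apply]
  have : ∀ i : Fin r, csA r key u i * (csA r key)ᵀ i v
      = if key u = (i:ℕ) ∧ key v = (i:ℕ) then (1:ℝ) else 0 := by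
    intro i
    simp only [csA, Matrix.transpose_apply, Matrix.of_apply, ite_mul, one_mul, zero_mul,
      ← ite_and]
  rw [Finset.sum_congr rfl fun i _ => this i, sum_ind]

lemma cs_psd (hcs : IsCS X r key) : X.PosSemidef := by
  rw [cs_factor hcs, ← Matrix.conjTranspose_eq_transpose_of_trivial]
  exact Matrix.posSemidef_self_mul_conjTranspose _

lemma cs_rank (hcs : IsCS X r key) : X.rank = r := by
  classical
  have hAA : (csA r key)ᵀ * csA r key
      = Matrix.diagonal (fun i : Fin r => ((Finset.univ.filter
          fun u : Fin n => key u = (i:ℕ)).card : ℝ)) := by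
    ext i j
    rw [Matrix.mul_apply]
    by_cases hij : i = j
    · subst hij
      rw [Matrix.diagonal_apply_eq]
      rw [← Finset.sum_boole]
      apply Finset.sum_congr rfl
      intro u _
      simp only [csA, Matrix.transpose_apply, Matrix.of_apply, ite_mul, one_mul, zero_mul,
        ← ite_and, and_self]
    · rw [Matrix.diagonal_apply_ne _ hij]
      apply Finset.sum_eq_zero
      intro u _
      simp only [csA, Matrix.transpose_apply, Matrix.of_apply, ite_mul, one_mul, zero_mul,
        ← ite_and]
      rw [if_neg]
      rintro ⟨h1, h2⟩
      exact hij (Fin.ext (h1.symm.trans h2))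
  have hcard : ∀ i : Fin r, ((Finset.univ.filter
      fun u : Fin n => key u = (i:ℕ)).card : ℝ) ≠ 0 := by
    intro i
    obtain ⟨u, hu⟩ := hcs.1 i i.isLt
    have : u ∈ Finset.univ.filter fun u : Fin n => key u = (i:ℕ) :=
      Finset.mem_filter.mpr ⟨Finset.mem_univ u, hu⟩
    have := Finset.card_pos.mpr ⟨u, this⟩
    positivity
  rw [cs_factor hcs, Matrix.rank_self_mul_transpose, ← Matrix.rank_transpose_mul_self, hAA,
    Matrix.rank_diagonal]
  rw [Fintype.card_subtype]
  rw [Finset.filter_true_of_mem fun i _ => hcard i]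
  simp
end CS
section Quad
variable {n : ℕ}

lemma vecMulVec_mulVec' (d x : Fin n → ℝ) :
    Matrix.vecMulVec d d *ᵥ x = (d ⬝ᵥ x) • d := by
  ext u
  simp only [Matrix.mulVec, Matrix.vecMulVec_apply, dotProduct, Pi.smul_apply,
    smul_eq_mul]
  rw [Finset.sum_mul]
  apply Finset.sum_congr rfl
  intros; ring

lemma form_expand (X : Matrix (Fin n) (Fin n) ℝ) (d : Fin n → ℝ) (t : ℝ) (x : Fin n → ℝ) :
    x ⬝ᵥ ((t • X - Matrix.vecMulVec d d) *ᵥ x) = t * (x ⬝ᵥ (X *ᵥ x)) - (d ⬝ᵥ x) ^ 2 := by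
  rw [Matrix.sub_mulVec, dotProduct_sub, Matrix.smul_mulVec,
    dotProduct_smul, vecMulVec_mulVec', dotProduct_smul]
  rw [dotProduct_comm x d]
  simp only [smul_eq_mul]
  ring

lemma psd_iff_forms (M : Matrix (Fin n) (Fin n) ℝ) (hherm : M.IsHermitian) :
    M.PosSemidef ↔ ∀ x : Fin n → ℝ, 0 ≤ x ⬝ᵥ (M *ᵥ x) := by
  constructor
  · intro h x
    simpa using (Matrix.posSemidef_iff_dotProduct_mulVec.mp h).2 x
  · intro h
    exact Matrix.posSemidef_iff_dotProduct_mulVec.mpr ⟨hherm, fun x => by simpa using h x⟩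
end Quad
section Iff4
variable {n : ℕ} {X : Matrix (Fin n) (Fin n) ℝ} {r : ℕ} {key : Fin n → ℕ}

lemma cs_symm (hcs : IsCS X r key) : X.IsSymm := by
  ext u v
  rw [Matrix.transpose_apply, hcs.2 u v, hcs.2 v u]
  by_cases h : key u = key v
  · rw [h]
  · rw [if_neg (by tauto), if_neg (by tauto)]

lemma cs_sA (hcs : IsCS X r key) (x : Fin n → ℝ) :
    x ⬝ᵥ (X *ᵥ x) = ∑ i : Fin r, ((csA r key)ᵀ *ᵥ x) i ^ 2 := by
  rw [cs_factor hcs, ← Matrix.mulVec_mulVec, Matrix.dotProduct_mulVec,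
    ← Matrix.mulVec_transpose]
  simp [dotProduct, sq]

lemma cs_diag (hcs : IsCS X r key) : X.diag = csA r key *ᵥ (fun _ => 1) := by
  ext u
  rw [Matrix.diag_apply, hcs.2 u u]
  simp only [Matrix.mulVec, dotProduct, csA, Matrix.of_apply, mul_one]
  rw [show (∑ i : Fin r, if key u = (i:ℕ) then (1:ℝ) else 0)
      = ∑ i : Fin r, if key u = (i:ℕ) ∧ key u = (i:ℕ) then (1:ℝ) else 0 by
    simp only [and_self], sum_ind]
  simp

lemma cs_dotdiag (hcs : IsCS X r key) (x : Fin n → ℝ) :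
    X.diag ⬝ᵥ x = ∑ i : Fin r, ((csA r key)ᵀ *ᵥ x) i := by
  rw [cs_diag hcs, dotProduct_comm, Matrix.dotProduct_mulVec,
    ← Matrix.mulVec_transpose]
  simp [dotProduct]

lemma cs_hermitian (hcs : IsCS X r key) (t : ℝ) :
    (t • X - Matrix.vecMulVec X.diag X.diag).IsHermitian := by
  rw [Matrix.IsHermitian, Matrix.conjTranspose_eq_transpose_of_trivial,
    Matrix.transpose_sub, Matrix.transpose_smul, (cs_symm hcs)]
  congr 1
  ext u v
  rw [Matrix.transpose_apply, Matrix.vecMulVec_apply, Matrix.vecMulVec_apply, mul_comm]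

lemma cs_iff4 (hcs : IsCS X r key) (t : ℝ) (ht : 0 ≤ t) :
    ((t • X - Matrix.vecMulVec X.diag X.diag).PosSemidef ↔ (r : ℝ) ≤ t) := by
  classical
  rw [psd_iff_forms _ (cs_hermitian hcs t)]
  constructor
  · intro h
    rcases Nat.eq_zero_or_pos r with hr | hr
    · rw [hr]; exact_mod_cast ht
    set x₀ : Fin n → ℝ := fun u => if h : key u < r
        then ((Finset.univ.filter fun v : Fin n => key v = key u).card : ℝ)⁻¹ else 0 with hx₀
    have hs : ∀ i : Fin r, ((csA r key)ᵀ *ᵥ x₀) i = 1 := by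
      intro i
      have hmpos : 0 < (Finset.univ.filter fun v : Fin n => key v = (i:ℕ)).card := by
        obtain ⟨u, hu⟩ := hcs.1 i i.isLt
        exact Finset.card_pos.mpr ⟨u, Finset.mem_filter.mpr ⟨Finset.mem_univ u, hu⟩⟩
      have : ((csA r key)ᵀ *ᵥ x₀) i = ∑ u ∈ Finset.univ.filter
          (fun u : Fin n => key u = (i:ℕ)), x₀ u := by
        rw [Finset.sum_filter]
        simp only [Matrix.mulVec, dotProduct, Matrix.transpose_apply, csA,
          Matrix.of_apply, ite_mul, one_mul, zero_mul]
      rw [this]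
      rw [Finset.sum_congr rfl (fun u hu => ?_), Finset.sum_const, nsmul_eq_mul,
        mul_inv_cancel₀ (by exact_mod_cast hmpos.ne')]
      · rcases Finset.mem_filter.mp hu with ⟨-, hku⟩
        rw [hx₀]
        dsimp only
        rw [dif_pos (hku ▸ i.isLt), hku]
    have h0 := h x₀
    rw [form_expand, cs_sA hcs, cs_dotdiag hcs] at h0
    simp only [hs, one_pow, Finset.sum_const, Finset.card_univ, Fintype.card_fin,
      nsmul_eq_mul, mul_one] at h0
    have hrr : (r:ℝ) * r ≤ t * r := by nlinarith
    have hrpos : (0:ℝ) < r := by exact_mod_cast hr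
    exact le_of_mul_le_mul_right hrr hrpos
  · intro h x
    rw [form_expand, cs_sA hcs, cs_dotdiag hcs]
    have h1 : (∑ i : Fin r, ((csA r key)ᵀ *ᵥ x) i) ^ 2
        ≤ (r : ℝ) * ∑ i : Fin r, ((csA r key)ᵀ *ᵥ x) i ^ 2 := by
      have := sq_sum_le_card_mul_sum_sq
        (s := (Finset.univ : Finset (Fin r))) (f := fun i => ((csA r key)ᵀ *ᵥ x) i)
      simpa using this
    have h2 : (r : ℝ) * ∑ i : Fin r, ((csA r key)ᵀ *ᵥ x) i ^ 2
        ≤ t * ∑ i : Fin r, ((csA r key)ᵀ *ᵥ x) i ^ 2 :=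
      mul_le_mul_of_nonneg_right h (Finset.sum_nonneg fun i _ => sq_nonneg _)
    linarith
end Iff4
section Clique
variable {n : ℕ} {X : Matrix (Fin n) (Fin n) ℝ}

lemma dot_pair (f : Fin n → ℝ) (u v : Fin n) (huv : u ≠ v) (a b : ℝ) :
    (∑ t : Fin n, (if t = u then a else if t = v then b else 0) * f t)
      = a * f u + b * f v := by
  have : ∀ t : Fin n, (if t = u then a else if t = v then b else 0) * f t
      = (if t = u then a * f t else 0) + (if t = v then b * f t else 0) := by
    intro t
    by_cases h1 : t = u
    · subst h1; rw [if_pos rfl, if_pos rfl, if_neg huv, add_zero]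
    · rw [if_neg h1, if_neg h1, zero_add]
      by_cases h2 : t = v
      · subst h2; rw [if_pos rfl, if_pos rfl]
      · rw [if_neg h2, if_neg h2, zero_mul]
  rw [Finset.sum_congr rfl fun t _ => this t, Finset.sum_add_distrib,
    Finset.sum_ite_eq' Finset.univ u (fun t => a * f t),
    Finset.sum_ite_eq' Finset.univ v (fun t => b * f t)]
  simp

lemma dot_pair' (f : Fin n → ℝ) (u v : Fin n) (huv : u ≠ v) (a b : ℝ) :
    (∑ t : Fin n, f t * (if t = u then a else if t = v then b else 0))
      = f u * a + f v * b := by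
  rw [Finset.sum_congr rfl fun t _ => mul_comm (f t) _, dot_pair f u v huv a b]
  ring

lemma dot_triple (f : Fin n → ℝ) (u v w : Fin n) (huv : u ≠ v) (huw : u ≠ w) (hvw : v ≠ w)
    (a b c : ℝ) :
    (∑ t : Fin n, (if t = u then a else if t = v then b else if t = w then c else 0) * f t)
      = a * f u + b * f v + c * f w := by
  have : ∀ t : Fin n, (if t = u then a else if t = v then b else if t = w then c else 0) * f t
      = (if t = u then a * f t else 0) + (if t = v then b * f t else 0)
        + (if t = w then c * f t else 0) := by
    intro t
    by_cases h1 : t = u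
    · subst h1; rw [if_pos rfl, if_pos rfl, if_neg huv, if_neg huw]; ring
    · rw [if_neg h1, if_neg h1, zero_add]
      by_cases h2 : t = v
      · subst h2; rw [if_pos rfl, if_pos rfl, if_neg hvw, add_zero]
      · rw [if_neg h2, if_neg h2, zero_add]
        by_cases h3 : t = w
        · subst h3; rw [if_pos rfl, if_pos rfl]
        · rw [if_neg h3, if_neg h3, zero_mul]
  rw [Finset.sum_congr rfl fun t _ => this t, Finset.sum_add_distrib, Finset.sum_add_distrib,
    Finset.sum_ite_eq' Finset.univ u (fun t => a * f t),
    Finset.sum_ite_eq' Finset.univ v (fun t => b * f t),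
    Finset.sum_ite_eq' Finset.univ w (fun t => c * f t)]
  simp

lemma dot_triple' (f : Fin n → ℝ) (u v w : Fin n) (huv : u ≠ v) (huw : u ≠ w) (hvw : v ≠ w)
    (a b c : ℝ) :
    (∑ t : Fin n, f t * (if t = u then a else if t = v then b else if t = w then c else 0))
      = f u * a + f v * b + f w * c := by
  rw [Finset.sum_congr rfl fun t _ => mul_comm (f t) _, dot_triple f u v w huv huw hvw a b c]
  ring

lemma quad_pair (X : Matrix (Fin n) (Fin n) ℝ) (u v : Fin n) (huv : u ≠ v) (a b : ℝ) :
    ((fun t => if t = u then a else if t = v then b else 0) ⬝ᵥ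
      (X *ᵥ fun t => if t = u then a else if t = v then b else 0))
      = a * (X u u * a + X u v * b) + b * (X v u * a + X v v * b) := by
  rw [dotProduct,
    dot_pair (X *ᵥ fun t => if t = u then a else if t = v then b else 0) u v huv a b,
    show (X *ᵥ fun t => if t = u then a else if t = v then b else 0) u
      = X u u * a + X u v * b from dot_pair' (X u) u v huv a b,
    show (X *ᵥ fun t => if t = u then a else if t = v then b else 0) v
      = X v u * a + X v v * b from dot_pair' (X v) u v huv a b]

lemma quad_triple (X : Matrix (Fin n) (Fin n) ℝ) (u v w : Fin n)
    (huv : u ≠ v) (huw : u ≠ w) (hvw : v ≠ w) (a b c : ℝ) :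
    ((fun t => if t = u then a else if t = v then b else if t = w then c else 0) ⬝ᵥ
      (X *ᵥ fun t => if t = u then a else if t = v then b else if t = w then c else 0))
      = a * (X u u * a + X u v * b + X u w * c) + b * (X v u * a + X v v * b + X v w * c)
        + c * (X w u * a + X w v * b + X w w * c) := by
  rw [dotProduct,
    dot_triple (X *ᵥ fun t => if t = u then a else if t = v then b else if t = w then c else 0)
      u v w huv huw hvw a b c,
    show (X *ᵥ fun t => if t = u then a else if t = v then b else if t = w then c else 0) u
      = X u u * a + X u v * b + X u w * c from dot_triple' (X u) u v w huv huw hvw a b c,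
    show (X *ᵥ fun t => if t = u then a else if t = v then b else if t = w then c else 0) v
      = X v u * a + X v v * b + X v w * c from dot_triple' (X v) u v w huv huw hvw a b c,
    show (X *ᵥ fun t => if t = u then a else if t = v then b else if t = w then c else 0) w
      = X w u * a + X w v * b + X w w * c from dot_triple' (X w) u v w huv huw hvw a b c]

lemma psd_clique (hsym : X.IsSymm) (h01 : ∀ i j, X i j = 0 ∨ X i j = 1)
    (hpsd : X.PosSemidef) : IsCliqueM X := by
  have happ : ∀ i j, X j i = X i j := fun i j => by
    rw [← Matrix.transpose_apply X i j, hsym]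
  have hq : ∀ x : Fin n → ℝ, 0 ≤ x ⬝ᵥ (X *ᵥ x) := fun x => by simpa using (Matrix.posSemidef_iff_dotProduct_mulVec.mp hpsd).2 x
  have hdd : ∀ i j, X i j = 1 → X i i = 1 := by
    intro u v huv
    by_contra huu
    have huu0 : X u u = 0 := (h01 u u).resolve_right huu
    have hne : u ≠ v := by rintro rfl; rw [huv] at huu0; norm_num at huu0
    have := hq (fun t => if t = u then 1 else if t = v then -1 else 0)
    rw [quad_pair X u v hne 1 (-1)] at this
    rw [huu0, huv, happ u v, huv] at this
    rcases h01 v v with h | h <;> rw [h] at this <;> nlinarith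
  refine ⟨hdd, ?_⟩
  intro u v w huv hvw
  by_cases he1 : u = v
  · subst he1; exact hvw
  by_cases he2 : v = w
  · subst he2; exact huv
  by_cases he3 : u = w
  · subst he3; exact hdd u v huv
  by_contra huw
  have huw0 : X u w = 0 := (h01 u w).resolve_right huw
  have d1 : X u u = 1 := hdd u v huv
  have d2 : X v v = 1 := hdd v w hvw
  have d3 : X w w = 1 := hdd w v (happ v w ▸ hvw)
  have := hq (fun t => if t = u then 1 else if t = v then -1 else if t = w then 1 else 0)
  rw [quad_triple X u v w he1 he3 he2 1 (-1) 1] at this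
  rw [d1, d2, d3, huv, hvw, huw0, happ u v, happ v w, happ u w, huv, hvw, huw0] at this
  nlinarith

lemma clique_ineqs (h01 : ∀ i j, X i j = 0 ∨ X i j = 1) (hsym : X.IsSymm) (hcl : IsCliqueM X) :
    (∀ i j, i ≠ j → X i j ≤ X i i) ∧
      (∀ i j k, j < k → i ≠ j → i ≠ k → X i j + X i k - X j k ≤ X i i) := by
  have happ : ∀ i j, X j i = X i j := fun i j => by
    rw [← Matrix.transpose_apply X i j, hsym]
  have hnn : ∀ i j, 0 ≤ X i j := by
    intro i j; rcases h01 i j with h | h <;> rw [h] <;> norm_num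
  constructor
  · intro i j _
    rcases h01 i j with h | h
    · rw [h]; exact hnn i i
    · rw [h, hcl.1 i j h]
  · intro i j k _ _ _
    rcases h01 i j with h1 | h1
    · rcases h01 i k with h2 | h2
      · rw [h1, h2]; have := hnn j k; have := hnn i i; linarith
      · rw [h1, h2, hcl.1 i k h2]; have := hnn j k; linarith
    · rcases h01 i k with h2 | h2
      · rw [h1, h2, hcl.1 i j h1]; have := hnn j k; linarith
      · have hjk : X j k = 1 := hcl.2 j i k (happ i j ▸ h1) h2
        rw [h1, h2, hjk, hcl.1 i j h1]; norm_num

lemma ineqs_clique (h01 : ∀ i j, X i j = 0 ∨ X i j = 1) (hsym : X.IsSymm)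
    (h2 : ∀ i j, i ≠ j → X i j ≤ X i i)
    (h3 : ∀ i j k, j < k → i ≠ j → i ≠ k → X i j + X i k - X j k ≤ X i i) :
    IsCliqueM X := by
  have happ : ∀ i j, X j i = X i j := fun i j => by
    rw [← Matrix.transpose_apply X i j, hsym]
  have hdd : ∀ i j, X i j = 1 → X i i = 1 := by
    intro i j hij
    by_cases he : i = j
    · rwa [← he] at hij
    · have := h2 i j he
      rcases h01 i i with h | h
      · rw [hij, h] at this; norm_num at this
      · exact h
  refine ⟨hdd, ?_⟩
  intro i j k hij hjk
  by_cases he1 : i = j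
  · subst he1; exact hjk
  by_cases he2 : j = k
  · subst he2; exact hij
  by_cases he3 : i = k
  · subst he3; exact hdd i j hij
  have hji : X j i = 1 := happ i j ▸ hij
  have hjj : X j j = 1 := hdd j k hjk
  rcases lt_or_gt_of_ne he3 with h | h
  · have := h3 j i k h (Ne.symm he1) he2
    rw [hji, hjk, hjj] at this
    rcases h01 i k with h0 | h0
    · rw [h0] at this; norm_num at this
    · exact h0
  · have := h3 j k i h he2 (Ne.symm he1)
    rw [hji, hjk, hjj, ← happ k i] at this
    rcases h01 i k with h0 | h0
    · rw [h0] at this; norm_num at this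
    · exact h0
end Clique
section Build
variable {n : ℕ} {X : Matrix (Fin n) (Fin n) ℝ}

lemma clique_cs (hsym : X.IsSymm) (h01 : ∀ i j, X i j = 0 ∨ X i j = 1)
    (hcl : IsCliqueM X) : ∃ (r : ℕ) (key : Fin n → ℕ), IsCS X r key := by
  classical
  have happ : ∀ i j, X j i = X i j := fun i j => by
    rw [← Matrix.transpose_apply X i j, hsym]
  set cls : Fin n → Finset (Fin n) := fun u => Finset.univ.filter fun v => X u v = 1 with hcls
  set C : Finset (Finset (Fin n)) :=
    (Finset.univ.filter fun u : Fin n => X u u = 1).image cls with hC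
  set r := C.card with hr
  have hmem : ∀ u : Fin n, X u u = 1 → cls u ∈ C := by
    intro u hu
    exact Finset.mem_image.mpr ⟨u, Finset.mem_filter.mpr ⟨Finset.mem_univ u, hu⟩, rfl⟩
  set key : Fin n → ℕ := fun u =>
    if h : X u u = 1 then ((C.equivFin ⟨cls u, hmem u h⟩ : Fin r) : ℕ) else r with hkey
  have hkeylt : ∀ u, X u u = 1 → key u < r := by
    intro u hu
    rw [hkey]; dsimp only; rw [dif_pos hu]
    exact (C.equivFin ⟨cls u, hmem u hu⟩).isLt
  have hkeyr : ∀ u, ¬ X u u = 1 → key u = r := by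
    intro u hu
    rw [hkey]; dsimp only; rw [dif_neg hu]
  have hclseq : ∀ u v, X u u = 1 → X v v = 1 → (X u v = 1 ↔ cls u = cls v) := by
    intro u v hu hv
    constructor
    · intro huv
      apply Finset.ext
      intro w
      simp only [hcls, Finset.mem_filter, Finset.mem_univ, true_and]
      constructor
      · intro hw; exact hcl.2 v u w (happ u v ▸ huv) hw
      · intro hw; exact hcl.2 u v w huv hw
    · intro h
      have : v ∈ cls v := Finset.mem_filter.mpr ⟨Finset.mem_univ v, hv⟩
      rw [← h] at this
      exact (Finset.mem_filter.mp this).2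
  have hkeyeq : ∀ u v (hu : X u u = 1) (hv : X v v = 1), (key u = key v ↔ cls u = cls v) := by
    intro u v hu hv
    rw [hkey]; dsimp only; rw [dif_pos hu, dif_pos hv]
    constructor
    · intro h
      have h2 : C.equivFin ⟨cls u, hmem u hu⟩ = C.equivFin ⟨cls v, hmem v hv⟩ := Fin.ext h
      have := C.equivFin.injective h2
      exact congrArg Subtype.val this
    · intro h
      congr 1
      exact congrArg _ (Subtype.ext h)
  refine ⟨r, key, ?_, ?_⟩
  · intro i hi
    obtain ⟨u, hu, hcu⟩ := Finset.mem_image.mp (C.equivFin.symm ⟨i, hi⟩).2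
    have hu1 : X u u = 1 := (Finset.mem_filter.mp hu).2
    refine ⟨u, ?_⟩
    rw [hkey]; dsimp only; rw [dif_pos hu1]
    have : (⟨cls u, hmem u hu1⟩ : {x // x ∈ C}) = C.equivFin.symm ⟨i, hi⟩ := Subtype.ext hcu
    rw [this, Equiv.apply_symm_apply]
  · intro u v
    by_cases hu : X u u = 1
    · by_cases hv : X v v = 1
      · by_cases huv : X u v = 1
        · rw [huv, if_pos ⟨(hkeyeq u v hu hv).mpr ((hclseq u v hu hv).mp huv), hkeylt u hu⟩]
        · have h0 : X u v = 0 := (h01 u v).resolve_right huv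
          rw [h0, if_neg]
          rintro ⟨h1, -⟩
          exact huv ((hclseq u v hu hv).mpr ((hkeyeq u v hu hv).mp h1))
      · have h0 : X u v = 0 := by
          rcases h01 u v with h | h
          · exact h
          · exact absurd (hcl.1 v u (happ u v ▸ h)) hv
        rw [h0, if_neg]
        rintro ⟨h1, h2⟩
        rw [hkeyr v hv] at h1
        rw [h1] at h2
        exact lt_irrefl _ h2
    · have h0 : X u v = 0 := by
        rcases h01 u v with h | h
        · exact h
        · exact absurd (hcl.1 u v h) hu
      rw [h0, if_neg]
      rintro ⟨-, h2⟩
      rw [hkeyr u hu] at h2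
      exact lt_irrefl _ h2
end Build
section Perm
variable {n : ℕ}

def permMat (σ : Equiv.Perm (Fin n)) : Matrix (Fin n) (Fin n) ℝ :=
  Matrix.of fun a b => if σ a = b then 1 else 0

lemma permMat_isPerm (σ : Equiv.Perm (Fin n)) : IsPermMatrix (permMat σ) := by
  refine ⟨fun i j => ?_, fun i => ?_, fun j => ?_⟩
  · by_cases h : σ i = j
    · right; simp [permMat, h]
    · left; simp [permMat, h]
  · rw [show ∑ j, permMat σ i j = ∑ j, if σ i = j then (1:ℝ) else 0 from rfl,
      Finset.sum_ite_eq Finset.univ (σ i) (fun _ => (1:ℝ))]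
    simp
  · rw [show ∑ i, permMat σ i j = ∑ i, if σ i = j then (1:ℝ) else 0 from rfl]
    rw [← Equiv.sum_comp σ.symm (fun i => if σ i = j then (1:ℝ) else 0)]
    simp only [Equiv.apply_symm_apply]
    rw [Finset.sum_ite_eq' Finset.univ j (fun _ => (1:ℝ))]
    simp

lemma permMat_conj (X : Matrix (Fin n) (Fin n) ℝ) (σ : Equiv.Perm (Fin n)) (a b : Fin n) :
    (permMat σ * X * (permMat σ)ᵀ) a b = X (σ a) (σ b) := by
  rw [Matrix.mul_apply]
  have h1 : ∀ c, (permMat σ * X) a c = X (σ a) c := by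
    intro c
    rw [Matrix.mul_apply]
    rw [Finset.sum_congr rfl fun k _ =>
      show permMat σ a k * X k c = if σ a = k then X k c else 0 from
        by by_cases h : σ a = k <;> simp [permMat, h]]
    rw [Finset.sum_ite_eq Finset.univ (σ a) (fun k => X k c)]
    simp
  rw [Finset.sum_congr rfl fun c _ => by
    rw [h1 c, Matrix.transpose_apply,
      show permMat σ b c = if σ b = c then (1:ℝ) else 0 from rfl, mul_ite, mul_one, mul_zero]]
  rw [Finset.sum_ite_eq Finset.univ (σ b) (fun c => X (σ a) c)]
  simp

lemma isPermMatrix_exists {Q : Matrix (Fin n) (Fin n) ℝ} (hQ : IsPermMatrix Q) :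
    ∃ σ : Equiv.Perm (Fin n), ∀ a b, Q a b = if σ a = b then 1 else 0 := by
  obtain ⟨h01, hrow, hcol⟩ := hQ
  have huniqr : ∀ a b b', Q a b = 1 → Q a b' = 1 → b = b' := by
    intro a b b' hb hb'
    by_contra hne
    have hsub : ({b, b'} : Finset (Fin n)) ⊆ Finset.univ := Finset.subset_univ _
    have h2 : ∑ j ∈ ({b, b'} : Finset (Fin n)), Q a j ≤ ∑ j, Q a j := by
      apply Finset.sum_le_sum_of_subset_of_nonneg hsub
      intro j _ _
      rcases h01 a j with h | h <;> rw [h] <;> norm_num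
    rw [Finset.sum_pair hne, hb, hb', hrow a] at h2
    norm_num at h2
  have huniqc : ∀ a a' b, Q a b = 1 → Q a' b = 1 → a = a' := by
    intro a a' b hb hb'
    by_contra hne
    have h2 : ∑ i ∈ ({a, a'} : Finset (Fin n)), Q i b ≤ ∑ i, Q i b := by
      apply Finset.sum_le_sum_of_subset_of_nonneg (Finset.subset_univ _)
      intro j _ _
      rcases h01 j b with h | h <;> rw [h] <;> norm_num
    rw [Finset.sum_pair hne, hb, hb', hcol b] at h2
    norm_num at h2
  have hex : ∀ a, ∃ b, Q a b = 1 := by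
    intro a
    by_contra hno
    push_neg at hno
    have : ∑ j, Q a j = 0 := Finset.sum_eq_zero fun j _ => (h01 a j).resolve_right (hno j)
    rw [hrow a] at this
    norm_num at this
  choose f hf using hex
  have hinj : Function.Injective f := fun a a' h => huniqc a a' (f a) (hf a) (h ▸ hf a')
  refine ⟨Equiv.ofBijective f (Finite.injective_iff_bijective.mp hinj), ?_⟩
  intro a b
  by_cases h : f a = b
  · simp only [Equiv.ofBijective_apply, h, if_pos]
    exact h ▸ hf a
  · rw [if_neg (by exact h)]
    rcases h01 a b with h0 | h0
    · exact h0
    · exact absurd (huniqr a (f a) b (hf a) h0) h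
end Perm
section BlockOnes
variable {r : ℕ}

def nsN (ns : Fin r → ℕ) : ℕ → ℕ := fun c => if h : c < r then ns ⟨c, h⟩ else 0

def offN (ns : Fin r → ℕ) : ℕ → ℕ := fun c => ∑ j ∈ Finset.range c, nsN ns j

lemma offN_mono (ns : Fin r → ℕ) {c d : ℕ} (h : c ≤ d) : offN ns c ≤ offN ns d :=
  Finset.sum_le_sum_of_subset (Finset.range_subset_range.mpr h)

lemma offN_succ (ns : Fin r → ℕ) (c : ℕ) : offN ns (c + 1) = offN ns c + nsN ns c :=
  Finset.sum_range_succ _ _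

lemma blockOffset_eq_offN (ns : Fin r → ℕ) (i : Fin r) :
    blockOffset ns i = offN ns (i : ℕ) := by
  rw [blockOffset,
    Finset.sum_congr rfl fun j _ => show ns j = nsN ns (j:ℕ) from by rw [nsN, dif_pos j.isLt]]
  exact sum_Iio_val (nsN ns) i

lemma offN_tile (ns : Fin r → ℕ) (k : ℕ) (a : ℕ) (h : a < offN ns k) :
    ∃ j, j < k ∧ offN ns j ≤ a ∧ a < offN ns (j + 1) := by
  induction k with
  | zero => simp [offN] at h
  | succ k ih =>
    by_cases hk : a < offN ns k
    · obtain ⟨j, hj1, hj2, hj3⟩ := ih hk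
      exact ⟨j, Nat.lt_succ_of_lt hj1, hj2, hj3⟩
    · exact ⟨k, Nat.lt_succ_self k, Nat.le_of_not_lt hk, h⟩

def keyB (ns : Fin r → ℕ) (a : ℕ) : ℕ := ((Finset.range r).filter fun j => offN ns (j+1) ≤ a).card

lemma keyB_le (ns : Fin r → ℕ) (a : ℕ) : keyB ns a ≤ r := by
  rw [keyB]
  exact le_trans (Finset.card_le_card (Finset.filter_subset _ _))
    (le_of_eq (Finset.card_range r))

lemma keyB_block (ns : Fin r → ℕ) {j a : ℕ} (hj : j < r)
    (h1 : offN ns j ≤ a) (h2 : a < offN ns (j+1)) : keyB ns a = j := by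
  rw [keyB]
  rw [show ((Finset.range r).filter fun k => offN ns (k+1) ≤ a) = Finset.range j from ?_,
    Finset.card_range]
  apply Finset.ext
  intro k
  rw [Finset.mem_filter, Finset.mem_range, Finset.mem_range]
  constructor
  · rintro ⟨hkr, hka⟩
    by_contra hkj
    have : offN ns (j+1) ≤ offN ns (k+1) :=
      offN_mono ns (Nat.succ_le_succ (Nat.le_of_not_lt hkj))
    omega
  · intro hkj
    refine ⟨lt_of_lt_of_le hkj (Nat.le_of_lt hj), le_trans (offN_mono ns hkj) h1⟩

lemma keyB_top (ns : Fin r → ℕ) {a : ℕ} (h : offN ns r ≤ a) : keyB ns a = r := by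
  rw [keyB, Finset.filter_true_of_mem, Finset.card_range]
  intro k hk
  exact le_trans (offN_mono ns (Finset.mem_range.mp hk)) h

lemma keyB_lt_iff (ns : Fin r → ℕ) (a : ℕ) : keyB ns a < r ↔ a < offN ns r := by
  constructor
  · intro h
    by_contra h2
    rw [keyB_top ns (Nat.le_of_not_lt h2)] at h
    exact lt_irrefl _ h
  · intro h
    obtain ⟨j, hj1, hj2, hj3⟩ := offN_tile ns r a h
    rw [keyB_block ns hj1 hj2 hj3]
    exact hj1

lemma keyB_mem_iff (ns : Fin r → ℕ) {j a : ℕ} (hj : j < r) :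
    (offN ns j ≤ a ∧ a < offN ns (j+1)) ↔ keyB ns a = j := by
  constructor
  · rintro ⟨h1, h2⟩; exact keyB_block ns hj h1 h2
  · intro h
    have ha : a < offN ns r := by
      rw [← keyB_lt_iff ns a, h]; exact hj
    obtain ⟨j', hj1, hj2, hj3⟩ := offN_tile ns r a ha
    rw [keyB_block ns hj1 hj2 hj3] at h
    subst h
    exact ⟨hj2, hj3⟩

lemma sum_fin_eq_offN (ns : Fin r → ℕ) : ∑ i : Fin r, ns i = offN ns r := by
  rw [offN, ← Fin.sum_univ_eq_sum_range]
  apply Finset.sum_congr rfl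
  intro i _
  rw [nsN, dif_pos i.isLt]

lemma blockOnes_cs {n : ℕ} (ns : Fin r → ℕ) (nz : ℕ) (hpos : ∀ i, 0 < ns i)
    (hsum : (∑ i, ns i) + nz = n) :
    IsCS (blockOnes n r ns) r (fun a => keyB ns (a : ℕ)) := by
  have hoffn : offN ns r ≤ n := by
    rw [← hsum, ← sum_fin_eq_offN]
    exact Nat.le_add_right _ _
  constructor
  · intro i hi
    have h1 : offN ns i < offN ns (i+1) := by
      rw [offN_succ, nsN, dif_pos hi]
      exact Nat.lt_add_of_pos_right (hpos ⟨i, hi⟩)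
    have h2 : offN ns i < n := lt_of_lt_of_le (lt_of_lt_of_le h1 (offN_mono ns hi)) hoffn
    exact ⟨⟨offN ns i, h2⟩, keyB_block ns hi (le_refl _) h1⟩
  · intro a b
    rw [show blockOnes n r ns a b = ∑ i : Fin r,
        if blockOffset ns i ≤ (a : ℕ) ∧ (a : ℕ) < blockOffset ns i + ns i ∧
          blockOffset ns i ≤ (b : ℕ) ∧ (b : ℕ) < blockOffset ns i + ns i then (1 : ℝ) else 0
      from rfl]
    rw [Finset.sum_congr rfl fun i _ => ?_, sum_ind]
    have hoffi : blockOffset ns i + ns i = offN ns ((i:ℕ)+1) := by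
      rw [blockOffset_eq_offN, offN_succ, nsN, dif_pos i.isLt]
    dsimp only
    rw [hoffi, blockOffset_eq_offN]
    apply if_congr _ rfl rfl
    rw [show (offN ns (i:ℕ) ≤ (a:ℕ) ∧ (a:ℕ) < offN ns ((i:ℕ)+1) ∧
        offN ns (i:ℕ) ≤ (b:ℕ) ∧ (b:ℕ) < offN ns ((i:ℕ)+1))
      ↔ ((offN ns (i:ℕ) ≤ (a:ℕ) ∧ (a:ℕ) < offN ns ((i:ℕ)+1)) ∧
        (offN ns (i:ℕ) ≤ (b:ℕ) ∧ (b:ℕ) < offN ns ((i:ℕ)+1))) from by tauto]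
    rw [keyB_mem_iff ns i.isLt, keyB_mem_iff ns i.isLt]
end BlockOnes
section Sorting
variable {n : ℕ} {X : Matrix (Fin n) (Fin n) ℝ} {r : ℕ} {key : Fin n → ℕ}

lemma cs_perm (hcs : IsCS X r key) :
    ∃ Q : Matrix (Fin n) (Fin n) ℝ, IsPermMatrix Q ∧
      ∃ (ns : Fin r → ℕ) (nz : ℕ), (∀ i, 0 < ns i) ∧ (∑ i, ns i) + nz = n ∧
        Q * X * Qᵀ = blockOnes n r ns := by
  classical
  set σ : Equiv.Perm (Fin n) := Tuple.sort key with hσ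
  set g : Fin n → ℕ := fun a => key (σ a) with hg
  have hmono : Monotone g := Tuple.monotone_sort key
  set m : ℕ → ℕ := fun c => (Finset.univ.filter fun a : Fin n => g a = c).card with hm
  set Nlt : ℕ → ℕ := fun c => (Finset.univ.filter fun a : Fin n => g a < c).card with hN
  have M1 : ∀ (a : Fin n) (c : ℕ), g a < c ↔ (a : ℕ) < Nlt c := by
    intro a c
    constructor
    · intro h
      have hsub : Finset.Iic a ⊆ Finset.univ.filter fun b : Fin n => g b < c := by
        intro b hb
        exact Finset.mem_filter.mpr ⟨Finset.mem_univ b,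
          lt_of_le_of_lt (hmono (Finset.mem_Iic.mp hb)) h⟩
      have := Finset.card_le_card hsub
      rw [Fin.card_Iic] at this
      simp only [hN]
      omega
    · intro h
      by_contra hc
      have hsub : (Finset.univ.filter fun b : Fin n => g b < c) ⊆ Finset.Iio a := by
        intro b hb
        rw [Finset.mem_Iio]
        by_contra hba
        have : g a ≤ g b := hmono (le_of_not_gt hba)
        have := (Finset.mem_filter.mp hb).2
        omega
      have := Finset.card_le_card hsub
      rw [Fin.card_Iio] at this
      simp only [hN] at h
      omega
  have Nlt_sum : ∀ c, Nlt c = ∑ j ∈ Finset.range c, m j := by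
    intro c
    rw [hN]
    dsimp only
    rw [Finset.card_eq_sum_card_fiberwise (f := g) (t := Finset.range c)
      (fun a ha => Finset.mem_range.mpr (Finset.mem_filter.mp ha).2)]
    apply Finset.sum_congr rfl
    intro j hj
    congr 1
    rw [Finset.filter_filter]
    apply Finset.filter_congr
    intro a _
    have hj' := Finset.mem_range.mp hj
    constructor
    · rintro ⟨-, h⟩; exact h
    · intro h; exact ⟨h ▸ hj', h⟩
  have char : ∀ (a : Fin n) (c : ℕ), key (σ a) = c ↔ (Nlt c ≤ (a:ℕ) ∧ (a:ℕ) < Nlt (c+1)) := by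
    intro a c
    have h1 := M1 a c
    have h2 := M1 a (c+1)
    have hga : g a = key (σ a) := rfl
    omega
  set ns : Fin r → ℕ := fun i => m (i : ℕ) with hns
  have hoff : ∀ i : Fin r, blockOffset ns i = Nlt (i : ℕ) := by
    intro i
    rw [blockOffset, Nlt_sum]
    exact sum_Iio_val m i
  have hoff2 : ∀ i : Fin r, blockOffset ns i + ns i = Nlt ((i : ℕ) + 1) := by
    intro i
    rw [hoff, Nlt_sum, Nlt_sum, Finset.sum_range_succ]
  refine ⟨permMat σ, permMat_isPerm σ, ns,
    (Finset.univ.filter fun a : Fin n => ¬ g a < r).card, ?_, ?_, ?_⟩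
  · intro i
    obtain ⟨u, hu⟩ := hcs.1 i i.isLt
    rw [hns]
    dsimp only
    apply Finset.card_pos.mpr
    refine ⟨σ.symm u, Finset.mem_filter.mpr ⟨Finset.mem_univ _, ?_⟩⟩
    rw [hg]
    dsimp only
    rw [Equiv.apply_symm_apply]
    exact hu
  · have h1 : ∑ i : Fin r, ns i = Nlt r := by
      rw [Nlt_sum, ← Fin.sum_univ_eq_sum_range]
    rw [h1, hN]
    dsimp only
    rw [Finset.card_filter_add_card_filter_not]
    simp
  · ext a b
    rw [permMat_conj X σ a b, hcs.2 (σ a) (σ b)]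
    rw [show blockOnes n r ns a b = ∑ i : Fin r,
        if blockOffset ns i ≤ (a : ℕ) ∧ (a : ℕ) < blockOffset ns i + ns i ∧
          blockOffset ns i ≤ (b : ℕ) ∧ (b : ℕ) < blockOffset ns i + ns i then (1 : ℝ) else 0
      from rfl]
    rw [Finset.sum_congr rfl fun i _ => ?_, sum_ind]
    · rw [hoff2, hoff]
      apply if_congr _ rfl rfl
      rw [show (Nlt (i:ℕ) ≤ (a:ℕ) ∧ (a:ℕ) < Nlt ((i:ℕ)+1) ∧
          Nlt (i:ℕ) ≤ (b:ℕ) ∧ (b:ℕ) < Nlt ((i:ℕ)+1))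
        ↔ ((Nlt (i:ℕ) ≤ (a:ℕ) ∧ (a:ℕ) < Nlt ((i:ℕ)+1)) ∧
          (Nlt (i:ℕ) ≤ (b:ℕ) ∧ (b:ℕ) < Nlt ((i:ℕ)+1))) from by tauto]
      rw [← char a (i:ℕ), ← char b (i:ℕ)]
end Sorting

/-- For a symmetric `{0,1}` matrix `X` and a nonnegative integer `r`, the following are
equivalent: (i) `X` is PSD of rank `r`; (ii) some simultaneous permutation of the rows and
columns of `X` is a block-diagonal matrix of `r` all-ones blocks followed by a zero block;
(iii) `rank X = r` and `X` satisfies the triangle inequalities;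
(iv) for every `t ≥ 0`, `t • X - diag(X) diag(X)ᵀ` is PSD iff `t ≥ r`. -/
theorem stmt0 (n r : ℕ) (X : Matrix (Fin n) (Fin n) ℝ) (hsym : X.IsSymm)
    (h01 : ∀ i j, X i j = 0 ∨ X i j = 1) :
    List.TFAE [
      X.PosSemidef ∧ X.rank = r,
      ∃ Q : Matrix (Fin n) (Fin n) ℝ, IsPermMatrix Q ∧
        ∃ (ns : Fin r → ℕ) (nz : ℕ), (∀ i, 0 < ns i) ∧ (∑ i, ns i) + nz = n ∧
          Q * X * Qᵀ = blockOnes n r ns,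
      X.rank = r ∧ (∀ i j, i ≠ j → X i j ≤ X i i) ∧
        (∀ i j k, j < k → i ≠ j → i ≠ k → X i j + X i k - X j k ≤ X i i),
      ∀ t : ℝ, 0 ≤ t →
        ((t • X - Matrix.vecMulVec X.diag X.diag).PosSemidef ↔ (r : ℝ) ≤ t)
    ] := by
  tfae_have 1 → 3 := by
    rintro ⟨hpsd, hrank⟩
    obtain ⟨hi2, hi3⟩ := clique_ineqs h01 hsym (psd_clique hsym h01 hpsd)
    exact ⟨hrank, hi2, hi3⟩
  tfae_have 3 → 2 := by
    rintro ⟨hrank, h2i, h3i⟩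
    obtain ⟨r', key, hcs⟩ := clique_cs hsym h01 (ineqs_clique h01 hsym h2i h3i)
    have hr : r' = r := by rw [← hrank, cs_rank hcs]
    subst hr
    exact cs_perm hcs
  tfae_have 2 → 4 := by
    rintro ⟨Q, hQ, ns, nz, hpos, hsum, hQX⟩
    obtain ⟨σ, hσ⟩ := isPermMatrix_exists hQ
    have hQeq : Q = permMat σ := by
      ext a b; rw [hσ a b]; rfl
    have hY : ∀ a b, blockOnes n r ns a b = X (σ a) (σ b) := by
      intro a b; rw [← hQX, hQeq, permMat_conj]
    have hcsY := blockOnes_cs ns nz hpos hsum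
    have hcsX : IsCS X r (fun u => keyB ns ((σ.symm u : Fin n) : ℕ)) := by
      constructor
      · intro i hi
        obtain ⟨a, ha⟩ := hcsY.1 i hi
        refine ⟨σ a, ?_⟩
        dsimp only
        rw [Equiv.symm_apply_apply]
        exact ha
      · intro u v
        have h := hcsY.2 (σ.symm u) (σ.symm v)
        rw [hY, Equiv.apply_symm_apply, Equiv.apply_symm_apply] at h
        exact h
    exact fun t ht => cs_iff4 hcsX t ht
  tfae_have 4 → 1 := by
    intro h4
    have hherm : X.IsHermitian := by
      rw [Matrix.IsHermitian, Matrix.conjTranspose_eq_transpose_of_trivial, hsym]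
    have hXpsd : X.PosSemidef := by
      rw [psd_iff_forms X hherm]
      intro x
      set t : ℝ := max (r:ℝ) 1 with htdef
      have ht0 : (0:ℝ) ≤ t := le_trans zero_le_one (le_max_right _ _)
      have ht1 : (1:ℝ) ≤ t := le_max_right _ _
      have hM := (h4 t ht0).mpr (le_max_left _ _)
      have h0 : 0 ≤ x ⬝ᵥ ((t • X - Matrix.vecMulVec X.diag X.diag) *ᵥ x) := by
        simpa using (Matrix.posSemidef_iff_dotProduct_mulVec.mp hM).2 x
      rw [form_expand] at h0
      by_contra hq
      push_neg at hq
      have hneg : t * (x ⬝ᵥ (X *ᵥ x)) < 0 := mul_neg_of_pos_of_neg (by linarith) hq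
      have := sq_nonneg (X.diag ⬝ᵥ x)
      linarith
    have hcl := psd_clique hsym h01 hXpsd
    obtain ⟨r', key, hcs⟩ := clique_cs hsym h01 hcl
    have hrank := cs_rank hcs
    have hA : (r:ℝ) ≤ (r':ℝ) :=
      (h4 (r':ℝ) (Nat.cast_nonneg r')).mp ((cs_iff4 hcs (r':ℝ) (Nat.cast_nonneg r')).mpr le_rfl)
    have hB : (r':ℝ) ≤ (r:ℝ) :=
      (cs_iff4 hcs (r:ℝ) (Nat.cast_nonneg r)).mp ((h4 (r:ℝ) (Nat.cast_nonneg r)).mpr le_rfl)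
    have hrr : r' = r := by exact_mod_cast le_antisymm hB hA
    exact ⟨hXpsd, hrr ▸ hrank⟩
  tfae_finish
end

section
/- Let X be a symmetric n×n real matrix with all entries in {0,1} and let r be a nonnegative integer. If the (n+1)×(n+1) block matrix Y with top-left 1×1 block equal to r, top-right 1×n block equal to diag(X)ᵀ, bottom-left n×1 block equal to diag(X), and bottom-right n×n block equal to X is PSD, then X is PSD and rank(X) ≤ r. -/
open Matrix Finset

section helpers
variable {n : ℕ}

lemma quad2 {M : Matrix (Fin n) (Fin n) ℝ} (hM : M.PosSemidef)
    {i j : Fin n} (hij : i ≠ j) (a b : ℝ) :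
    0 ≤ a * a * M i i + a * b * M i j + b * a * M j i + b * b * M j j := by
  have h := hM.dotProduct_mulVec_nonneg (Pi.single i a + Pi.single j b)
  simp only [star_trivial, mulVec_add, mulVec_single, dotProduct_add, add_dotProduct,
    single_dotProduct, Pi.add_apply, Pi.single_eq_same, Pi.single_eq_of_ne hij,
    Pi.single_eq_of_ne hij.symm, Pi.smul_apply, col_apply, MulOpposite.smul_eq_mul_unop,
    MulOpposite.unop_op] at h
  linarith [h]

lemma quad3 {M : Matrix (Fin n) (Fin n) ℝ} (hM : M.PosSemidef)
    {i j k : Fin n} (hij : i ≠ j) (hjk : j ≠ k) (hik : i ≠ k) (a b c : ℝ) :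
    0 ≤ a * a * M i i + b * b * M j j + c * c * M k k
      + a * b * (M i j + M j i) + a * c * (M i k + M k i) + b * c * (M j k + M k j) := by
  have h := hM.dotProduct_mulVec_nonneg (Pi.single i a + Pi.single j b + Pi.single k c)
  simp only [star_trivial, mulVec_add, mulVec_single, dotProduct_add, add_dotProduct,
    single_dotProduct, Pi.add_apply, Pi.single_eq_same, Pi.single_eq_of_ne hij,
    Pi.single_eq_of_ne hij.symm, Pi.single_eq_of_ne hjk, Pi.single_eq_of_ne hjk.symm,
    Pi.single_eq_of_ne hik, Pi.single_eq_of_ne hik.symm, Pi.smul_apply, col_apply,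
    MulOpposite.smul_eq_mul_unop, MulOpposite.unop_op] at h
  linarith [h]

variable {X : Matrix (Fin n) (Fin n) ℝ}

lemma symm_app (hsym : X.IsSymm) (i j : Fin n) : X j i = X i j := by
  have := congrFun (congrFun hsym i) j
  simpa [Matrix.transpose_apply] using this

lemma diag_one (hX : X.PosSemidef) (hsym : X.IsSymm)
    (h01 : ∀ i j, X i j = 0 ∨ X i j = 1) :
    ∀ i j, X i j = 1 → X i i = 1 := by
  intro i j hij1
  rcases h01 i i with h | h
  · exfalso
    rcases eq_or_ne i j with rfl | hne
    · rw [hij1] at h; norm_num at h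
    · have := quad2 hX hne (-(X j j + 1)/2) 1
      rw [h, hij1, symm_app hsym i j, hij1] at this
      linarith
  · exact h

lemma trans_one (hX : X.PosSemidef) (hsym : X.IsSymm)
    (h01 : ∀ i j, X i j = 0 ∨ X i j = 1) :
    ∀ i j k, X i j = 1 → X j k = 1 → X i k = 1 := by
  intro i j k hij hjk
  rcases eq_or_ne i j with rfl | hij' ; · exact hjk
  rcases eq_or_ne j k with rfl | hjk' ; · exact hij
  rcases eq_or_ne i k with rfl | hik'
  · exact diag_one hX hsym h01 i j hij
  rcases h01 i k with h | h
  · exfalso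
    have h3 := quad3 hX hij' hjk' hik' 1 (-1) 1
    have hii := diag_one hX hsym h01 i j hij
    have hjj := diag_one hX hsym h01 j k hjk
    have hkk : X k k = 1 := diag_one hX hsym h01 k j (symm_app hsym j k ▸ hjk)
    rw [hii, hjj, hkk, hij, hjk, symm_app hsym i j, symm_app hsym j k,
      symm_app hsym i k, hij, hjk, h] at h3
    linarith
  · exact h

/-- the class of `i` : all `l` with `X i l = 1`. -/
noncomputable def cls (X : Matrix (Fin n) (Fin n) ℝ) (i : Fin n) : Finset (Fin n) :=
  Finset.univ.filter fun l => X i l = 1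

/-- representative of the class of `i`. -/
noncomputable def repIdx (X : Matrix (Fin n) (Fin n) ℝ) (i : Fin n) : Fin n :=
  if h : X i i = 1 then (cls X i).min' ⟨i, by simp [cls, h]⟩ else i

end helpers

/-- The `(n+1) × (n+1)` block matrix with top-left `1×1` block equal to the scalar `c`,
top-right block `(diag X)ᵀ`, bottom-left block `diag X`, and bottom-right block `X`. -/
def diagCornerBlock {n : ℕ} (c : ℝ) (X : Matrix (Fin n) (Fin n) ℝ) :
    Matrix (Fin 1 ⊕ Fin n) (Fin 1 ⊕ Fin n) ℝ :=
  Matrix.fromBlocks (Matrix.of fun (_ : Fin 1) (_ : Fin 1) => c)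
    (Matrix.of fun (_ : Fin 1) j => X.diag j)
    (Matrix.of fun i (_ : Fin 1) => X.diag i) X

/-- If `X` is a symmetric `{0,1}` matrix and the block matrix
`[[r, diag(X)ᵀ], [diag(X), X]]` is PSD, then `X` is PSD with `rank X ≤ r`. -/
theorem stmt1 (n r : ℕ) (X : Matrix (Fin n) (Fin n) ℝ) (hsym : X.IsSymm)
    (h01 : ∀ i j, X i j = 0 ∨ X i j = 1)
    (hY : (diagCornerBlock (r : ℝ) X).PosSemidef) :
    X.PosSemidef ∧ X.rank ≤ r := by
  classical
  have hX : X.PosSemidef := by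
    have h := hY.submatrix (Sum.inr : Fin n → Fin 1 ⊕ Fin n)
    have heq : (diagCornerBlock (r : ℝ) X).submatrix Sum.inr Sum.inr = X := by
      ext i j; rfl
    rwa [heq] at h
  have hdiag := diag_one hX hsym h01
  have htr := trans_one hX hsym h01
  have hsy := symm_app hsym
  -- basic facts about classes
  have hclseq : ∀ i j, X i j = 1 → cls X i = cls X j := by
    intro i j hij
    ext l
    simp only [cls, mem_filter, mem_univ, true_and]
    constructor
    · intro h; exact htr j i l (hsy i j ▸ hij) h
    · intro h; exact htr i j l hij h
  have hmin : ∀ (s t : Finset (Fin n)) (h : s = t) h1 h2, s.min' h1 = t.min' h2 := by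
    rintro s t rfl h1 h2; rfl
  have hρmem : ∀ i, X i i = 1 → X i (repIdx X i) = 1 := by
    intro i hi
    have := (cls X i).min'_mem ⟨i, by simp [cls, hi]⟩
    simp only [cls, mem_filter] at this
    simpa [repIdx, dif_pos hi, cls] using this.2
  have hρeq : ∀ i j, X i j = 1 → repIdx X i = repIdx X j := by
    intro i j hij
    have hi : X i i = 1 := hdiag i j hij
    have hj : X j j = 1 := hdiag j i (hsy i j ▸ hij)
    simp only [repIdx, dif_pos hi, dif_pos hj]
    exact hmin _ _ (hclseq i j hij) _ _
  -- class sizes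
  set c : Fin n → ℕ := fun i => (cls X i).card with hc
  have hcpos : ∀ i, X i i = 1 → 0 < c i := by
    intro i hi
    exact Finset.card_pos.2 ⟨i, by simp [cls, hi]⟩
  -- the test vector
  set xv : Fin n → ℝ := fun i => if X i i = 1 then -(1 / (c i : ℝ)) else 0 with hxv
  -- sum of xv over a class
  have hclsum : ∀ t, X t t = 1 → ∑ l ∈ cls X t, xv l = -1 := by
    intro t ht
    have hval : ∀ l ∈ cls X t, xv l = -(1 / (c t : ℝ)) := by
      intro l hl
      simp only [cls, mem_filter, mem_univ, true_and] at hl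
      have hll : X l l = 1 := hdiag l t (hsy t l ▸ hl)
      have : c l = c t := by
        show (cls X l).card = (cls X t).card
        rw [hclseq l t (hsy t l ▸ hl)]
      simp [hxv, hll, this]
    rw [Finset.sum_congr rfl hval, Finset.sum_const, nsmul_eq_mul]
    have h0 : (c t : ℝ) ≠ 0 := Nat.cast_ne_zero.2 (hcpos t ht).ne'
    field_simp
    rfl
  -- S and T
  set Sf : Finset (Fin n) := Finset.univ.filter fun i => X i i = 1 with hSf
  set T : Finset (Fin n) := Sf.image (repIdx X) with hT
  have hTfix : ∀ t ∈ T, X t t = 1 ∧ repIdx X t = t := by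
    intro t htT
    rw [hT] at htT
    obtain ⟨s, hs, rfl⟩ := Finset.mem_image.1 htT
    rw [hSf] at hs; simp only [mem_filter, mem_univ, true_and] at hs
    have h1 : X s (repIdx X s) = 1 := hρmem s hs
    refine ⟨hdiag (repIdx X s) s (hsy s (repIdx X s) ▸ h1), (hρeq s (repIdx X s) h1).symm⟩
  -- fibers of repIdx over Sf are classes
  have hfiber : ∀ t ∈ T, Sf.filter (fun i => repIdx X i = t) = cls X t := by
    intro t htT
    obtain ⟨ht, hfix⟩ := hTfix t htT
    ext l
    simp only [hSf, cls, mem_filter, mem_univ, true_and]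
    constructor
    · rintro ⟨hl, hρl⟩
      have : X l t = 1 := hρl ▸ hρmem l hl
      exact hsy t l ▸ (hsy l t ▸ this)
    · intro h
      have hlt : X l t = 1 := hsy t l ▸ h
      have hll : X l l = 1 := hdiag l t hlt
      exact ⟨hll, (hρeq l t hlt).trans hfix⟩
  -- key diagonal sum
  have hdiagsum : ∑ i, X i i * xv i = -(T.card : ℝ) := by
    have e1 : ∑ i, X i i * xv i = ∑ i ∈ Sf, xv i := by
      rw [hSf, Finset.sum_filter]
      refine Finset.sum_congr rfl fun i _ => ?_
      rcases h01 i i with h | h <;> simp [h]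
    have e2 : ∑ t ∈ T, ∑ i ∈ Sf.filter (fun i => repIdx X i = t), xv i = ∑ i ∈ Sf, xv i := by
      refine Finset.sum_fiberwise_of_maps_to ?_ _
      intro i hi
      rw [hT]; exact Finset.mem_image_of_mem _ hi
    rw [e1, ← e2]
    have e3 : ∀ t ∈ T, ∑ i ∈ Sf.filter (fun i => repIdx X i = t), xv i = -1 := by
      intro t htT
      rw [hfiber t htT]
      exact hclsum t (hTfix t htT).1
    rw [Finset.sum_congr rfl e3, Finset.sum_const, nsmul_eq_mul]
    ring
  -- row sums against xv
  have hrowsum : ∀ i, ∑ j, X i j * xv j = if X i i = 1 then -1 else 0 := by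
    intro i
    have e1 : ∑ j, X i j * xv j = ∑ j ∈ cls X i, xv j := by
      rw [cls, Finset.sum_filter]
      refine Finset.sum_congr rfl fun j _ => ?_
      rcases h01 i j with h | h <;> simp [h]
    rcases h01 i i with h | h
    · have : ∀ j, X i j = 0 := by
        intro j
        rcases h01 i j with h' | h' ; · exact h'
        exact absurd (hdiag i j h') (by rw [h]; norm_num)
      simp [h, this]
    · rw [e1, hclsum i h, if_pos h]
  -- evaluate the quadratic form of the block matrix at (1, xv)
  have hmv : (diagCornerBlock (r:ℝ) X) *ᵥ (Sum.elim (fun _ : Fin 1 => (1:ℝ)) xv)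
      = Sum.elim (fun _ : Fin 1 => (r:ℝ) + ∑ j, X j j * xv j)
        (fun i => X i i + ∑ j, X i j * xv j) := by
    rw [diagCornerBlock, fromBlocks_mulVec]
    funext p
    rcases p with a | i
    · simp [mulVec, dotProduct, Matrix.diag]
    · simp [mulVec, dotProduct, Matrix.diag]
  have hq := hY.dotProduct_mulVec_nonneg (Sum.elim (fun _ : Fin 1 => (1:ℝ)) xv)
  rw [star_trivial, hmv, sumElim_dotProduct_sumElim] at hq
  have hz : ∀ i, xv i * (X i i + ∑ j, X i j * xv j) = 0 := by
    intro i
    rw [hrowsum i]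
    by_cases h : X i i = 1
    · rw [if_pos h, h]; ring
    · have : xv i = 0 := by simp [hxv, h]
      rw [this, zero_mul]
  have hq' : 0 ≤ (r:ℝ) + (∑ j, X j j * xv j) := by
    have e : xv ⬝ᵥ (fun i => X i i + ∑ j, X i j * xv j) = 0 := by
      rw [dotProduct]
      exact Finset.sum_eq_zero fun i _ => hz i
    have e2 : (fun _ : Fin 1 => (1:ℝ)) ⬝ᵥ (fun _ : Fin 1 => (r:ℝ) + ∑ j, X j j * xv j)
        = (r:ℝ) + ∑ j, X j j * xv j := by
      simp [dotProduct]
    rw [e, e2, add_zero] at hq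
    exact hq
  have hkr : (T.card : ℝ) ≤ (r : ℝ) := by
    rw [hdiagsum] at hq'
    linarith
  have hkr' : T.card ≤ r := by exact_mod_cast hkr
  -- rank bound: all columns lie in the span of the representative columns
  have hcol : ∀ j, Xᵀ j ∈ Submodule.span ℝ
      ((T.image fun t => Xᵀ t : Finset (Fin n → ℝ)) : Set (Fin n → ℝ)) := by
    intro j
    by_cases hj : X j j = 1
    · have hmemT : repIdx X j ∈ T := by
        rw [hT]; exact Finset.mem_image_of_mem _ (by simp [hSf, hj])
      have hceq : Xᵀ j = Xᵀ (repIdx X j) := by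
        funext i
        show X i j = X i (repIdx X j)
        have h1 : X j (repIdx X j) = 1 := hρmem j hj
        rcases h01 i j with h | h
        · rcases h01 i (repIdx X j) with h' | h'
          · rw [h, h']
          · exfalso
            have := htr i (repIdx X j) j h' (hsy j (repIdx X j) ▸ h1)
            rw [h] at this; norm_num at this
        · rw [h, htr i j (repIdx X j) h h1]
      rw [hceq]
      exact Submodule.subset_span (by simpa using Finset.mem_image_of_mem (fun t => Xᵀ t) hmemT)
    · have hzero : Xᵀ j = 0 := by
        funext i
        show X i j = 0
        rcases h01 i j with h | h
        · exact h
        · exact absurd (hdiag j i (hsy i j ▸ h)) hj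
      rw [hzero]
      exact Submodule.zero_mem _
  have hrank : X.rank ≤ T.card := by
    rw [Matrix.rank_eq_finrank_span_cols]
    have hle : Submodule.span ℝ (Set.range Xᵀ)
        ≤ Submodule.span ℝ ((T.image fun t => Xᵀ t : Finset (Fin n → ℝ)) : Set (Fin n → ℝ)) :=
      Submodule.span_le.2 (by rintro _ ⟨j, rfl⟩; exact hcol j)
    calc Module.finrank ℝ ↥(Submodule.span ℝ (Set.range Xᵀ))
        ≤ Module.finrank ℝ ↥(Submodule.span ℝ
            ((T.image fun t => Xᵀ t : Finset (Fin n → ℝ)) : Set (Fin n → ℝ))) :=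
          Submodule.finrank_mono hle
      _ ≤ (T.image fun t => Xᵀ t).card := finrank_span_finset_le_card _
      _ ≤ T.card := Finset.card_image_le
  exact ⟨hX, hrank.trans hkr'⟩
end

section
/- Let X be a symmetric n×n real matrix with all entries in {0,1} and let r be a positive integer. If there exists a matrix P ∈ {0,1}^{n×r} with Pᵀ1_n ≥ 1_r (every column of P is nonzero) such that the (n+r)×(n+r) block matrix Y with top-left block I_r, top-right block Pᵀ, bottom-left block P and bottom-right block X is PSD, then X is PSD and rank(X) ≥ r. -/
open Matrix

/-- If `X` is a symmetric `{0,1}` matrix, `r ≥ 1`, and there is a `{0,1}` matrix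
`P ∈ {0,1}^{n×r}` with every column nonzero (`Pᵀ 1_n ≥ 1_r`) such that the block matrix
`[[I_r, Pᵀ], [P, X]]` is PSD, then `X` is PSD with `rank X ≥ r`. -/
theorem stmt2 (n r : ℕ) (hr : 0 < r) (X : Matrix (Fin n) (Fin n) ℝ) (hsym : X.IsSymm)
    (h01 : ∀ i j, X i j = 0 ∨ X i j = 1)
    (P : Matrix (Fin n) (Fin r) ℝ) (hP01 : ∀ i j, P i j = 0 ∨ P i j = 1)
    (hPcol : ∀ j : Fin r, (1 : ℝ) ≤ ∑ i, P i j)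
    (hY : (Matrix.fromBlocks (1 : Matrix (Fin r) (Fin r) ℝ) Pᵀ P X).PosSemidef) :
    X.PosSemidef ∧ r ≤ X.rank := by
  classical
  -- X is PSD as a principal submatrix
  have hsub : (fromBlocks (1 : Matrix (Fin r) (Fin r) ℝ) Pᵀ P X).submatrix
      (Sum.inr : Fin n → Fin r ⊕ Fin n) Sum.inr = X := by
    ext i j; simp
  have hXpsd : X.PosSemidef := hsub ▸ hY.submatrix Sum.inr
  refine ⟨hXpsd, ?_⟩
  -- Schur complement: X - P Pᵀ is PSD
  have hone : (1 : Matrix (Fin r) (Fin r) ℝ).PosDef := by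
    refine PosDef.of_dotProduct_mulVec_pos isHermitian_one fun x hx => ?_
    simp only [one_mulVec, star_trivial]
    have := dotProduct_self_eq_zero (v := x)
    have h0 : 0 ≤ x ⬝ᵥ x := Finset.sum_nonneg fun i _ => mul_self_nonneg _
    rcases h0.lt_or_eq with h | h
    · exact h
    · exact absurd (dotProduct_self_eq_zero.mp h.symm) hx
  have hSchur : (X - P * Pᵀ).PosSemidef := by
    haveI : Invertible (1 : Matrix (Fin r) (Fin r) ℝ) := invertibleOne
    have hY' : (fromBlocks (1 : Matrix (Fin r) (Fin r) ℝ) Pᵀ (Pᵀ)ᴴ X).PosSemidef := by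
      simpa [conjTranspose_eq_transpose_of_trivial, transpose_transpose] using hY
    have := (PosDef.fromBlocks₁₁ (Pᵀ) X hone).mp hY'
    simpa [conjTranspose_eq_transpose_of_trivial, transpose_transpose] using this
  -- each row of P has at most one 1
  have hrow : ∀ i, ∑ j, P i j ≤ 1 := by
    intro i
    have hd : 0 ≤ (X - P * Pᵀ) i i := by
      have := hSchur.dotProduct_mulVec_nonneg (Pi.single i 1)
      simpa [dotProduct, mulVec, Pi.single_apply, Finset.sum_ite_eq, mul_comm] using this
    have hXii : X i i ≤ 1 := by rcases h01 i i with h | h <;> simp [h]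
    have hPP : (P * Pᵀ) i i = ∑ j, P i j := by
      simp only [mul_apply, transpose_apply]
      refine Finset.sum_congr rfl fun j _ => ?_
      rcases hP01 i j with h | h <;> simp [h]
    simp only [Matrix.sub_apply, hPP] at hd
    linarith
  -- hence rows of distinct columns are disjoint
  have hdisj : ∀ (i : Fin n) (j j' : Fin r), j ≠ j' → P i j * P i j' = 0 := by
    intro i j j' hne
    rcases hP01 i j with h | h; · simp [h]
    rcases hP01 i j' with h' | h'; · simp [h']
    exfalso
    have hle : P i j + P i j' ≤ ∑ k, P i k := by
      have : ∑ k ∈ ({j, j'} : Finset (Fin r)), P i k ≤ ∑ k, P i k := by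
        apply Finset.sum_le_sum_of_subset_of_nonneg (Finset.subset_univ _)
        intro k _ _; rcases hP01 i k with h | h <;> simp [h]
      rwa [Finset.sum_pair hne] at this
    have := hrow i
    rw [h, h'] at hle
    linarith
  -- PᵀP is an invertible diagonal matrix
  have hdiagPP : Pᵀ * P = diagonal (fun j => ∑ i, P i j) := by
    ext j j'
    by_cases hjj : j = j'
    · subst hjj
      simp only [mul_apply, transpose_apply, diagonal_apply_eq]
      refine Finset.sum_congr rfl fun i _ => ?_
      rcases hP01 i j with h | h <;> simp [h]
    · simp only [mul_apply, transpose_apply, diagonal_apply_ne _ hjj]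
      exact Finset.sum_eq_zero fun i _ => hdisj i j j' hjj
  have hunit : IsUnit (Pᵀ * P) := by
    rw [hdiagPP]
    rw [Matrix.isUnit_iff_isUnit_det, det_diagonal]
    refine isUnit_iff_ne_zero.mpr (Finset.prod_ne_zero_iff.mpr fun j _ => ?_)
    have := hPcol j; positivity
  have hrankP : (P * Pᵀ).rank = r := by
    rw [rank_self_mul_transpose, ← rank_transpose_mul_self, rank_of_isUnit _ hunit,
      Fintype.card_fin]
  -- kernel of X is contained in kernel of P Pᵀ
  have hker : LinearMap.ker X.mulVecLin ≤ LinearMap.ker (P * Pᵀ).mulVecLin := by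
    intro x hx
    rw [LinearMap.mem_ker, mulVecLin_apply] at hx ⊢
    have h1 : x ⬝ᵥ ((X - P * Pᵀ) *ᵥ x) ≥ 0 := by
      simpa [star_trivial] using hSchur.dotProduct_mulVec_nonneg x
    have h2 : x ⬝ᵥ ((P * Pᵀ) *ᵥ x) = (Pᵀ *ᵥ x) ⬝ᵥ (Pᵀ *ᵥ x) := by
      rw [← mulVec_mulVec, dotProduct_mulVec, ← mulVec_transpose]
    rw [sub_mulVec, dotProduct_sub, hx, dotProduct_zero, zero_sub] at h1
    have h3 : (Pᵀ *ᵥ x) ⬝ᵥ (Pᵀ *ᵥ x) ≤ 0 := by rw [← h2]; linarith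
    have h4 : 0 ≤ (Pᵀ *ᵥ x) ⬝ᵥ (Pᵀ *ᵥ x) := Finset.sum_nonneg fun i _ => mul_self_nonneg _
    have h5 : Pᵀ *ᵥ x = 0 := dotProduct_self_eq_zero.mp (le_antisymm h3 h4)
    rw [← mulVec_mulVec, h5, mulVec_zero]
  -- conclude via rank-nullity
  have e1 := LinearMap.finrank_range_add_finrank_ker X.mulVecLin
  have e2 := LinearMap.finrank_range_add_finrank_ker (P * Pᵀ).mulVecLin
  have hkf : Module.finrank ℝ (LinearMap.ker X.mulVecLin) ≤
      Module.finrank ℝ (LinearMap.ker (P * Pᵀ).mulVecLin) :=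
    Submodule.finrank_mono hker
  rw [← hrankP]
  show Module.finrank ℝ (LinearMap.range (P * Pᵀ).mulVecLin) ≤
    Module.finrank ℝ (LinearMap.range X.mulVecLin)
  omega
end

section
/- Let X be a symmetric n×n real matrix with all entries in {0,1} and let r be a positive integer. If there exists a matrix P ∈ {0,1}^{n×r} with Pᵀ1_n ≥ 1_r and P1_r = diag(X) such that the (n+r)×(n+r) block matrix Y with top-left block I_r, top-right block Pᵀ, bottom-left block P and bottom-right block X is PSD, then X is PSD and rank(X) = r. -/
open Matrix

-- PSD matrix with zero diagonal is zero
lemma psd_diag_zero_eq_zero {n : ℕ} {M : Matrix (Fin n) (Fin n) ℝ} (hM : M.PosSemidef)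
    (hd : ∀ i, M i i = 0) : M = 0 := by
  ext i j
  have h1 : M *ᵥ (Pi.single j 1) = 0 := by
    rw [← hM.dotProduct_mulVec_zero_iff]
    simp [mulVec_single, dotProduct, Pi.single_apply, hd j]
  have := congrFun h1 i
  simpa [mulVec_single] using this


/-- If `X` is a symmetric `{0,1}` matrix, `r ≥ 1`, and there is a `{0,1}` matrix
`P ∈ {0,1}^{n×r}` with `Pᵀ 1_n ≥ 1_r` and `P 1_r = diag X` such that the block matrix
`[[I_r, Pᵀ], [P, X]]` is PSD, then `X` is PSD with `rank X = r`. -/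
theorem stmt3 (n r : ℕ) (hr : 0 < r) (X : Matrix (Fin n) (Fin n) ℝ) (hsym : X.IsSymm)
    (h01 : ∀ i j, X i j = 0 ∨ X i j = 1)
    (P : Matrix (Fin n) (Fin r) ℝ) (hP01 : ∀ i j, P i j = 0 ∨ P i j = 1)
    (hPcol : ∀ j : Fin r, (1 : ℝ) ≤ ∑ i, P i j)
    (hProw : P.mulVec (fun _ => 1) = X.diag)
    (hY : (Matrix.fromBlocks (1 : Matrix (Fin r) (Fin r) ℝ) Pᵀ P X).PosSemidef) :
    X.PosSemidef ∧ X.rank = r := by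
  have hXpsd : X.PosSemidef := by
    have := hY.submatrix (Sum.inr : Fin n → Fin r ⊕ Fin n)
    exact this
  -- Schur complement
  have h1inv : Invertible (1 : Matrix (Fin r) (Fin r) ℝ) := invertibleOne
  have hPH : (Pᵀ)ᴴ = P := by ext i j; simp
  have hschur := (Matrix.PosDef.fromBlocks₁₁ Pᵀ X Matrix.PosDef.one).mp
    (by rw [hPH]; exact hY)
  rw [hPH, inv_one, Matrix.mul_one] at hschur
  -- diagonal entries of X
  have hdiag : ∀ i, X i i = ∑ j, P i j := by
    intro i
    have := congrFun hProw i
    simp [mulVec, dotProduct, Matrix.diag] at this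
    rw [← this]
  -- P entries squared = themselves
  have hsq : ∀ i j, P i j * P i j = P i j := by
    intro i j; rcases hP01 i j with h | h <;> simp [h]
  have hzero : X - P * Pᵀ = 0 := by
    apply psd_diag_zero_eq_zero hschur
    intro i
    simp [Matrix.mul_apply, hdiag i, hsq]
  have hXPP : X = P * Pᵀ := by
    have := sub_eq_zero.mp hzero
    exact this
  -- rows of P have at most one 1: PᵀP is diagonal
  have hrow_le : ∀ i, ∑ j, P i j ≤ 1 := by
    intro i
    rw [← hdiag i]
    rcases h01 i i with h | h <;> simp [h]
  have hdiagPtP : Pᵀ * P = Matrix.diagonal (fun j => ∑ i, P i j) := by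
    ext j k
    by_cases hjk : j = k
    · subst hjk
      simp [Matrix.mul_apply, hsq]
    · simp only [Matrix.mul_apply, Matrix.diagonal_apply_ne _ hjk, transpose_apply]
      apply Finset.sum_eq_zero
      intro i _
      by_contra hne
      have hj1 : P i j = 1 := (hP01 i j).resolve_left (by intro h; simp [h] at hne)
      have hk1 : P i k = 1 := (hP01 i k).resolve_left (by intro h; simp [h] at hne)
      have h2 : (2 : ℝ) ≤ ∑ j', P i j' := by
        have : ∑ j' ∈ ({j, k} : Finset (Fin r)), P i j' ≤ ∑ j', P i j' := by
          apply Finset.sum_le_sum_of_subset_of_nonneg (Finset.subset_univ _)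
          intro x _ _; rcases hP01 i x with h | h <;> simp [h]
        rw [Finset.sum_pair hjk, hj1, hk1] at this
        linarith
      linarith [hrow_le i]
  have hunit : IsUnit (Pᵀ * P) := by
    rw [hdiagPtP, Matrix.isUnit_iff_isUnit_det, Matrix.det_diagonal]
    apply isUnit_iff_ne_zero.mpr
    apply Finset.prod_ne_zero_iff.mpr
    intro j _
    linarith [hPcol j]
  have hrankP : P.rank = r := by
    have h1 : (Pᵀ * P).rank = r := by
      rw [Matrix.rank_of_isUnit _ hunit, Fintype.card_fin]
    rw [← Matrix.rank_transpose_mul_self P, h1]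
  refine ⟨hXpsd, ?_⟩
  rw [hXPP, Matrix.rank_self_mul_transpose, hrankP]
end

section
/- Let x ∈ ℝⁿ, let X be a symmetric n×n real matrix with diag(X) = x, and let Y be the (n+1)×(n+1) block matrix with top-left 1×1 block equal to 1, top-right block xᵀ, bottom-left block x, and bottom-right block X. If Y is PSD, then rank(Y) = 1 if and only if all entries of X are in {0,1}. -/
open Matrix

/-- The `(n+1) × (n+1)` block matrix with top-left `1×1` block equal to `1`,
top-right block `xᵀ`, bottom-left block `x`, and bottom-right block `X`. -/
def liftedBlock {n : ℕ} (x : Fin n → ℝ) (X : Matrix (Fin n) (Fin n) ℝ) :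
    Matrix (Fin 1 ⊕ Fin n) (Fin 1 ⊕ Fin n) ℝ :=
  Matrix.fromBlocks (Matrix.of fun (_ : Fin 1) (_ : Fin 1) => (1 : ℝ))
    (Matrix.of fun (_ : Fin 1) j => x j)
    (Matrix.of fun i (_ : Fin 1) => x i) X

lemma aux_rank_submatrix_le {l o N : Type*} [Fintype N] [Fintype l] [Fintype o]
    [DecidableEq N] (A : Matrix N N ℝ) (f : l → N) (g : o → N) :
    (A.submatrix f g).rank ≤ A.rank := by
  have h : A.submatrix f g =
      (Matrix.of fun i k => if f i = k then (1:ℝ) else 0) * A *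
      (Matrix.of fun k j => if k = g j then (1:ℝ) else 0) := by
    ext i j
    simp [Matrix.mul_apply, Finset.sum_ite_eq, Finset.sum_ite_eq', ite_mul, mul_ite]
  rw [h]
  exact (Matrix.rank_mul_le_left _ _).trans (Matrix.rank_mul_le_right _ _)

lemma aux_det_nonneg {N : Type*} [Fintype N] [DecidableEq N] {M : Matrix N N ℝ}
    (hM : M.PosSemidef) : 0 ≤ M.det := by
  rw [hM.isHermitian.det_eq_prod_eigenvalues]
  exact Finset.prod_nonneg fun i _ => hM.eigenvalues_nonneg i

lemma aux_det_eq_zero (B : Matrix (Fin 2) (Fin 2) ℝ) (h : B.rank ≤ 1) : B.det = 0 := by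
  by_contra hd
  have h2 : B.rank = 2 := by
    simpa using Matrix.rank_of_isUnit B
      ((Matrix.isUnit_iff_isUnit_det B).mpr (isUnit_iff_ne_zero.mpr hd))
  omega

lemma aux_one_le_rank {N : Type*} [Fintype N] [DecidableEq N] {M : Matrix N N ℝ}
    (a b : N) (h : M a b ≠ 0) : 1 ≤ M.rank := by
  rw [Nat.one_le_iff_ne_zero]
  intro h0
  have hbot : LinearMap.range M.mulVecLin = ⊥ := Submodule.finrank_eq_zero.mp h0
  have h2 : M.mulVecLin (Pi.single b 1) = 0 := by
    rw [LinearMap.range_eq_bot.mp hbot]; rfl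
  apply h
  have := congrFun h2 a
  simpa [Matrix.mulVecLin, Matrix.mulVec_single] using this

/-- Let `X` be symmetric with `diag X = x` and suppose the block matrix
`Y = [[1, xᵀ], [x, X]]` is PSD. Then `rank Y = 1` iff all entries of `X` lie in `{0,1}`. -/
theorem stmt4 (n : ℕ) (x : Fin n → ℝ) (X : Matrix (Fin n) (Fin n) ℝ)
    (hsym : X.IsSymm) (hdiag : X.diag = x)
    (hY : (liftedBlock x X).PosSemidef) :
    (liftedBlock x X).rank = 1 ↔ ∀ i j, X i j = 0 ∨ X i j = 1 := by
  have hd : ∀ i, X i i = x i := fun i => congrFun hdiag i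
  constructor
  · intro hr i j
    have hkey : ∀ i j, X i j = x i * x j := by
      intro i j
      have hle := aux_rank_submatrix_le (liftedBlock x X)
        ![Sum.inl 0, Sum.inr i] ![Sum.inl 0, Sum.inr j]
      rw [hr] at hle
      have hdet := aux_det_eq_zero _ hle
      rw [Matrix.det_fin_two] at hdet
      simp only [Matrix.submatrix_apply, Matrix.cons_val_zero, Matrix.cons_val_one,
        Matrix.head_cons, liftedBlock, Matrix.fromBlocks_apply₁₁, Matrix.fromBlocks_apply₁₂,
        Matrix.fromBlocks_apply₂₁, Matrix.fromBlocks_apply₂₂, Matrix.of_apply] at hdet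
      linarith
    have hx : ∀ k, x k = 0 ∨ x k = 1 := by
      intro k
      have h1 := hkey k k
      rw [hd k] at h1
      have : x k * (x k - 1) = 0 := by ring_nf; linarith
      rcases mul_eq_zero.mp this with h | h
      · exact Or.inl h
      · exact Or.inr (by linarith)
    rw [hkey i j]
    rcases hx i with h1 | h1 <;> rcases hx j with h2 | h2 <;>
      simp [h1, h2]
  · intro hX
    have hx : ∀ k, x k = 0 ∨ x k = 1 := fun k => (hd k) ▸ hX k k
    have hkey : ∀ i j, X i j = x i * x j := by
      intro i j
      by_cases hij : i = j
      · subst hij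
        rw [hd i]
        rcases hx i with h | h <;> rw [h] <;> ring
      · have hji : X j i = X i j := hsym.apply j i ▸ rfl
        rcases hx i with h1 | h1
        · -- x i = 0 : use 2×2 principal minor on (i, j)
          have hps := hY.submatrix ![Sum.inr i, Sum.inr j]
          have hdet := aux_det_nonneg hps
          rw [Matrix.det_fin_two] at hdet
          simp only [Matrix.submatrix_apply, Matrix.cons_val_zero, Matrix.cons_val_one,
            Matrix.head_cons, liftedBlock, Matrix.fromBlocks_apply₂₂] at hdet
          rw [hd i, hd j, h1] at hdet
          ring_nf at hdet
          rw [hji] at hdet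
          have h0 : X i j = 0 :=
            mul_self_eq_zero.mp (le_antisymm (by nlinarith) (mul_self_nonneg _))
          rw [h0, h1]; ring
        · rcases hx j with h2 | h2
          · -- x j = 0
            have hps := hY.submatrix ![Sum.inr i, Sum.inr j]
            have hdet := aux_det_nonneg hps
            rw [Matrix.det_fin_two] at hdet
            simp only [Matrix.submatrix_apply, Matrix.cons_val_zero, Matrix.cons_val_one,
              Matrix.head_cons, liftedBlock, Matrix.fromBlocks_apply₂₂] at hdet
            rw [hd i, hd j, h2] at hdet
            ring_nf at hdet
            rw [hji] at hdet
            have h0 : X i j = 0 :=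
              mul_self_eq_zero.mp (le_antisymm (by nlinarith) (mul_self_nonneg _))
            rw [h0, h2]; ring
          · -- both 1 : use 3×3 principal minor on (0, i, j)
            have hps := hY.submatrix ![Sum.inl 0, Sum.inr i, Sum.inr j]
            have hdet := aux_det_nonneg hps
            rw [Matrix.det_fin_three] at hdet
            simp only [Matrix.submatrix_apply, Matrix.cons_val_zero, Matrix.cons_val_one,
              Matrix.head_cons, Matrix.cons_val_two, Matrix.tail_cons, liftedBlock,
              Matrix.fromBlocks_apply₁₁, Matrix.fromBlocks_apply₁₂, Matrix.fromBlocks_apply₂₁,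
              Matrix.fromBlocks_apply₂₂, Matrix.of_apply] at hdet
            rw [hd i, hd j, h1, h2] at hdet
            ring_nf at hdet
            rw [hji] at hdet
            have h0 : X i j - 1 = 0 :=
              mul_self_eq_zero.mp (le_antisymm (by nlinarith) (mul_self_nonneg _))
            have h0' : X i j = 1 := by linarith
            rw [h0', h1, h2]; ring
    have hvv : liftedBlock x X = Matrix.vecMulVec (Sum.elim (fun _ => (1:ℝ)) x)
        (Sum.elim (fun _ => (1:ℝ)) x) := by
      ext a b
      cases a <;> cases b <;>
        simp [liftedBlock, Matrix.vecMulVec_apply, hkey, Matrix.fromBlocks_apply₁₁,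
          Matrix.fromBlocks_apply₁₂, Matrix.fromBlocks_apply₂₁, Matrix.fromBlocks_apply₂₂]
    apply le_antisymm
    · rw [hvv, Matrix.vecMulVec_eq (Fin 1)]
      exact (Matrix.rank_mul_le_left _ _).trans
        ((Matrix.rank_le_card_width _).trans (by simp))
    · exact aux_one_le_rank (Sum.inl 0) (Sum.inl 0) (by simp [liftedBlock])
end

section
/- For n ≥ 1 and 0 ≤ r ≤ n, the number of symmetric n×n matrices with entries in {0,1} that are PSD and have rank at most r equals Σ_{k=1}^{r+1} S(n+1, k), where S(m, k) is the Stirling number of the second kind. In particular, the number of PSD {0,1}-matrices of order n with rank at most 1 equals 2ⁿ, and the number of all PSD {0,1}-matrices of order n equals the Bell number B_{n+1}. -/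
open Matrix

/-- The Stirling number of the second kind `S(m, k)`: the number of partitions of an
`m`-element set into exactly `k` nonempty subsets.  Defined by the standard recurrence
`S(m+1, k+1) = (k+1) S(m, k+1) + S(m, k)` with `S(0,0) = 1`, `S(0,k+1) = 0`, `S(m+1,0) = 0`. -/
def stirlingSnd : ℕ → ℕ → ℕ
  | 0, 0 => 1
  | 0, _ + 1 => 0
  | _ + 1, 0 => 0
  | m + 1, k + 1 => (k + 1) * stirlingSnd m (k + 1) + stirlingSnd m k

/-- The Bell number `B_m = Σ_{k=0}^{m} S(m,k)`: the number of partitions of an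
`m`-element set. -/
def bellNumber (m : ℕ) : ℕ := ∑ k ∈ Finset.range (m + 1), stirlingSnd m k

namespace SM

/-- Restricted growth string condition. -/
def RGS {m : ℕ} (f : Fin m → ℕ) : Prop :=
  ∀ i : Fin m, ∀ v : ℕ, v < f i → ∃ j : Fin m, j < i ∧ f j = v

/-- number of values -/
def nv {m : ℕ} (f : Fin m → ℕ) : ℕ := (Finset.univ.image f).card

def Sset (m k : ℕ) : Set (Fin m → ℕ) := {f | RGS f ∧ nv f = k}

/-- a downward-closed finset of naturals is an initial segment -/
lemma dc_range (s : Finset ℕ) (h : ∀ a ∈ s, ∀ b < a, b ∈ s) :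
    s = Finset.range s.card := by
  have hsub : s ⊆ Finset.range s.card := by
    intro a ha
    rw [Finset.mem_range]
    have : Finset.range (a + 1) ⊆ s := by
      intro b hb
      rw [Finset.mem_range, Nat.lt_succ_iff] at hb
      rcases lt_or_eq_of_le hb with hb | hb
      · exact h a ha b hb
      · rwa [hb]
    have := Finset.card_le_card this
    simpa using this
  exact Finset.eq_of_subset_of_card_le hsub (by simp)

lemma rgs_image {m : ℕ} {f : Fin m → ℕ} (hf : RGS f) :
    Finset.univ.image f = Finset.range (nv f) := by
  apply dc_range
  intro a ha b hb
  simp only [Finset.mem_image, Finset.mem_univ, true_and] at ha ⊢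
  obtain ⟨i, rfl⟩ := ha
  obtain ⟨j, _, hj⟩ := hf i b hb
  exact ⟨j, hj⟩

lemma rgs_le {m : ℕ} {f : Fin m → ℕ} (hf : RGS f) (i : Fin m) : f i ≤ (i : ℕ) := by
  have hsub : Finset.range (f i) ⊆ (Finset.Iio i).image f := by
    intro v hv
    rw [Finset.mem_range] at hv
    obtain ⟨j, hj, hj2⟩ := hf i v hv
    exact Finset.mem_image.2 ⟨j, Finset.mem_Iio.2 hj, hj2⟩
  have := Finset.card_le_card hsub
  simpa using this.trans ((Finset.card_image_le).trans (by simp))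

lemma rgs_zero {m : ℕ} {f : Fin (m + 1) → ℕ} (hf : RGS f) : f 0 = 0 :=
  Nat.le_zero.1 (by simpa using rgs_le hf 0)

lemma sset_finite (m k : ℕ) : (Sset m k).Finite := by
  apply Set.Finite.subset (Set.Finite.pi (fun i : Fin m => Set.finite_Iic (i : ℕ)))
  intro f hf
  simp only [Set.mem_pi, Set.mem_univ, Set.mem_Iic, forall_true_left]
  exact fun i => rgs_le hf.1 i

instance (m k : ℕ) : Finite (Sset m k) := (sset_finite m k).to_subtype

/-- restriction of an RGS is an RGS -/
lemma rgs_init {m : ℕ} {f : Fin (m + 1) → ℕ} (hf : RGS f) : RGS (f ∘ Fin.castSucc) := by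
  intro i v hv
  obtain ⟨j, hj, hjv⟩ := hf i.castSucc v hv
  have hjm : (j : ℕ) < m := lt_of_lt_of_le hj (by simpa using Fin.is_le i)
  refine ⟨⟨j, hjm⟩, by simpa [Fin.lt_def] using hj, ?_⟩
  have hcast : Fin.castSucc ⟨(j : ℕ), hjm⟩ = j := Fin.ext rfl
  simp only [Function.comp_apply, hcast, hjv]

lemma image_succ {m : ℕ} (f : Fin (m + 1) → ℕ) :
    Finset.univ.image f =
      insert (f (Fin.last m)) (Finset.univ.image (f ∘ Fin.castSucc)) := by
  ext v
  simp only [Finset.mem_image, Finset.mem_univ, true_and, Finset.mem_insert, Function.comp_apply]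
  constructor
  · rintro ⟨i, rfl⟩
    rcases Fin.eq_castSucc_or_eq_last i with ⟨j, rfl⟩ | rfl
    · exact Or.inr ⟨j, rfl⟩
    · exact Or.inl rfl
  · rintro (rfl | ⟨j, rfl⟩)
    · exact ⟨Fin.last m, rfl⟩
    · exact ⟨j.castSucc, rfl⟩

lemma rgs_snoc {m : ℕ} {g : Fin m → ℕ} (hg : RGS g) (c : ℕ)
    (hc : c ≤ nv g) : RGS (Fin.snoc g c) := by
  intro i v hv
  rcases Fin.eq_castSucc_or_eq_last i with ⟨i', rfl⟩ | rfl
  · rw [Fin.snoc_castSucc] at hv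
    obtain ⟨j, hj, hjv⟩ := hg i' v hv
    refine ⟨j.castSucc, Fin.castSucc_lt_castSucc_iff.2 hj, ?_⟩
    rw [Fin.snoc_castSucc]; exact hjv
  · rw [Fin.snoc_last] at hv
    have : v ∈ Finset.univ.image g := by
      rw [rgs_image hg, Finset.mem_range]
      exact lt_of_lt_of_le hv hc
    obtain ⟨j, _, hjv⟩ := Finset.mem_image.1 this
    refine ⟨j.castSucc, Fin.castSucc_lt_last j, ?_⟩
    rw [Fin.snoc_castSucc]; exact hjv

lemma image_snoc {m : ℕ} (g : Fin m → ℕ) (c : ℕ) :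
    Finset.univ.image (Fin.snoc g c : Fin (m+1) → ℕ) = insert c (Finset.univ.image g) := by
  rw [image_succ]
  congr 1
  · simp
  · congr 1; funext j; simp

lemma nv_snoc_mem {m : ℕ} {g : Fin m → ℕ} {c : ℕ} (h : c ∈ Finset.univ.image g) :
    nv (Fin.snoc g c) = nv g := by
  rw [nv, image_snoc, Finset.insert_eq_self.2 h]; rfl

lemma nv_snoc_not_mem {m : ℕ} {g : Fin m → ℕ} {c : ℕ} (h : c ∉ Finset.univ.image g) :
    nv (Fin.snoc g c) = nv g + 1 := by
  rw [nv, image_snoc, Finset.card_insert_of_notMem h]; rfl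

def toS (m k : ℕ) : ((Fin (k + 1) × Sset m (k + 1)) ⊕ Sset m k) → (Fin (m + 1) → ℕ)
  | .inl (c, g) => Fin.snoc g.1 (c : ℕ)
  | .inr g => Fin.snoc g.1 k

lemma mem_image_of_sset {m k : ℕ} (g : Sset m k) (c : ℕ) :
    c ∈ Finset.univ.image g.1 ↔ c < k := by
  rw [rgs_image g.2.1, g.2.2, Finset.mem_range]

lemma toS_mem (m k : ℕ) (p) : toS m k p ∈ Sset (m + 1) (k + 1) := by
  rcases p with ⟨c, g⟩ | g <;> simp only [toS]
  · constructor
    · exact rgs_snoc g.2.1 _ (by rw [g.2.2]; exact Nat.le_of_lt c.isLt)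
    · rw [nv_snoc_mem ((mem_image_of_sset g c).2 c.isLt), g.2.2]
  · constructor
    · exact rgs_snoc g.2.1 _ (le_of_eq g.2.2.symm)
    · rw [nv_snoc_not_mem (fun h => lt_irrefl k ((mem_image_of_sset g k).1 h)), g.2.2]

lemma snoc_last_eq {m : ℕ} (g : Fin m → ℕ) (c : ℕ) :
    (Fin.snoc g c : Fin (m+1) → ℕ) (Fin.last m) = c := Fin.snoc_last ..

lemma snoc_init_eq {m : ℕ} (g g' : Fin m → ℕ) (c c' : ℕ)
    (h : (Fin.snoc g c : Fin (m+1) → ℕ) = Fin.snoc g' c') : g = g' ∧ c = c' := by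
  constructor
  · funext i
    have := congrFun h i.castSucc
    simpa using this
  · have := congrFun h (Fin.last m)
    simpa using this

lemma toS_inj (m k : ℕ) : Function.Injective (toS m k) := by
  rintro (⟨c, g⟩ | g) (⟨c', g'⟩ | g') h
  · obtain ⟨hg, hc⟩ := snoc_init_eq _ _ _ _ h
    simp only [Sum.inl.injEq, Prod.mk.injEq]
    exact ⟨Fin.ext hc, Subtype.ext hg⟩
  · obtain ⟨hg, hc⟩ := snoc_init_eq _ _ _ _ h
    exfalso
    have : (c : ℕ) ∈ Finset.univ.image g.1 := (mem_image_of_sset g c).2 c.isLt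
    rw [hc, hg] at this
    exact lt_irrefl k ((mem_image_of_sset g' k).1 this)
  · obtain ⟨hg, hc⟩ := snoc_init_eq _ _ _ _ h
    exfalso
    have : (c' : ℕ) ∈ Finset.univ.image g'.1 := (mem_image_of_sset g' c').2 c'.isLt
    rw [← hc, ← hg] at this
    exact lt_irrefl k ((mem_image_of_sset g k).1 this)
  · obtain ⟨hg, _⟩ := snoc_init_eq _ _ _ _ h
    simp only [Sum.inr.injEq]
    exact Subtype.ext hg

lemma toS_surj (m k : ℕ) (f : Fin (m+1) → ℕ) (hf : f ∈ Sset (m+1) (k+1)) :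
    ∃ p, toS m k p = f := by
  classical
  obtain ⟨hrgs, hnv⟩ := hf
  have hinit : RGS (f ∘ Fin.castSucc) := rgs_init hrgs
  by_cases hmem : f (Fin.last m) ∈ Finset.univ.image (f ∘ Fin.castSucc)
  · have hnv' : nv (f ∘ Fin.castSucc) = k + 1 := by
      have h2 := image_succ f
      rw [Finset.insert_eq_self.2 hmem] at h2
      rw [nv, ← h2]; exact hnv
    have hlt : f (Fin.last m) < k + 1 := by
      rw [rgs_image hinit, hnv', Finset.mem_range] at hmem
      exact hmem
    refine ⟨Sum.inl ⟨⟨f (Fin.last m), hlt⟩, ⟨f ∘ Fin.castSucc, hinit, hnv'⟩⟩, ?_⟩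
    exact Fin.snoc_init_self f
  · have hnv' : nv (f ∘ Fin.castSucc) = k := by
      have h2 : nv f = nv (f ∘ Fin.castSucc) + 1 := by
        rw [nv, nv, image_succ f, Finset.card_insert_of_notMem hmem]
      omega
    have hub : f (Fin.last m) ≤ k := by
      by_contra hcon
      push_neg at hcon
      obtain ⟨j, hj, hjv⟩ := hrgs (Fin.last m) k hcon
      apply hmem
      obtain ⟨j', rfl⟩ : ∃ j' : Fin m, j'.castSucc = j :=
        ⟨⟨j, lt_of_lt_of_le (Fin.lt_def.1 hj) (by simp)⟩, Fin.ext rfl⟩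
      exfalso
      have hk : k ∈ Finset.univ.image (f ∘ Fin.castSucc) :=
        Finset.mem_image.2 ⟨j', Finset.mem_univ _, hjv⟩
      rw [rgs_image hinit, hnv', Finset.mem_range] at hk
      exact lt_irrefl k hk
    have hlb : ¬ f (Fin.last m) < k := by
      intro hcon
      apply hmem
      rw [rgs_image hinit, hnv', Finset.mem_range]
      exact hcon
    have hlast : f (Fin.last m) = k := by omega
    refine ⟨Sum.inr ⟨f ∘ Fin.castSucc, hinit, hnv'⟩, ?_⟩
    show (Fin.snoc (f ∘ Fin.castSucc) k : Fin (m+1) → ℕ) = f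
    rw [← hlast]
    exact Fin.snoc_init_self f

noncomputable def recEquiv (m k : ℕ) :
    ((Fin (k + 1) × Sset m (k + 1)) ⊕ Sset m k) ≃ Sset (m + 1) (k + 1) :=
  Equiv.ofBijective (fun p => ⟨toS m k p, toS_mem m k p⟩)
    ⟨fun p q h => toS_inj m k (congrArg Subtype.val h),
     fun f => (toS_surj m k f.1 f.2).imp (fun p hp => Subtype.ext hp)⟩

lemma card_sset (m k : ℕ) : (Sset m k).ncard = stirlingSnd m k := by
  induction m generalizing k with
  | zero =>
    cases k with
    | zero =>
      have : Sset 0 0 = Set.univ := by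
        ext f
        simp only [Sset, Set.mem_setOf_eq, Set.mem_univ, iff_true]
        exact ⟨fun i => i.elim0, by simp [nv]⟩
      rw [this, stirlingSnd]
      simp [Set.ncard_univ]
    | succ k =>
      have : Sset 0 (k+1) = ∅ := by
        ext f
        simp only [Sset, Set.mem_setOf_eq, Set.mem_empty_iff_false, iff_false]
        rintro ⟨-, hnv⟩
        simp [nv] at hnv
      rw [this, stirlingSnd]
      simp
  | succ m ih =>
    cases k with
    | zero =>
      have : Sset (m+1) 0 = ∅ := by
        ext f
        simp only [Sset, Set.mem_setOf_eq, Set.mem_empty_iff_false, iff_false]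
        rintro ⟨-, hnv⟩
        have : f 0 ∈ Finset.univ.image f := Finset.mem_image_of_mem f (Finset.mem_univ 0)
        rw [nv] at hnv
        rw [Finset.card_eq_zero.1 hnv] at this
        simp at this
      rw [this, stirlingSnd]
      simp
    | succ k =>
      have h1 : Nat.card (Sset (m+1) (k+1)) =
          Nat.card ((Fin (k + 1) × Sset m (k + 1)) ⊕ Sset m k) :=
        (Nat.card_congr (recEquiv m k)).symm
      rw [← Nat.card_coe_set_eq, h1, Nat.card_sum, Nat.card_prod,
        Nat.card_eq_fintype_card, Fintype.card_fin, Nat.card_coe_set_eq,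
        Nat.card_coe_set_eq, ih (k+1), ih k, stirlingSnd]


variable {α : Type*} [DecidableEq α] {m : ℕ}

/-- first occurrence of the value of `rep` at `i` -/
def fo (rep : Fin m → α) (i : Fin m) : Fin m :=
  (Finset.univ.filter (fun j => rep j = rep i)).min' ⟨i, by simp⟩

lemma fo_le (rep : Fin m → α) (i : Fin m) : fo rep i ≤ i :=
  Finset.min'_le _ _ (by simp)

lemma rep_fo (rep : Fin m → α) (i : Fin m) : rep (fo rep i) = rep i := by
  have := Finset.min'_mem (Finset.univ.filter (fun j => rep j = rep i)) ⟨i, by simp⟩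
  simpa [fo] using this

lemma fo_min (rep : Fin m → α) {i j : Fin m} (h : j < fo rep i) : rep j ≠ rep i := by
  intro hc
  exact absurd (Finset.min'_le _ j (by simp [hc])) (not_le.2 h)

lemma fo_congr (rep : Fin m → α) {i j : Fin m} (h : rep i = rep j) : fo rep i = fo rep j := by
  unfold fo
  congr 1
  ext l
  simp [h]

lemma fo_fo (rep : Fin m → α) (i : Fin m) : fo rep (fo rep i) = fo rep i :=
  fo_congr rep (rep_fo rep i)

/-- canonical labeling -/
def canon (rep : Fin m → α) (i : Fin m) : ℕ :=
  ((Finset.Iio (fo rep i)).image rep).card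

lemma canon_fo (rep : Fin m → α) (i : Fin m) : canon rep (fo rep i) = canon rep i := by
  unfold canon
  rw [fo_fo]

lemma canon_strict (rep : Fin m → α) {i j : Fin m} (h : j < fo rep i) :
    canon rep j < canon rep i := by
  unfold canon
  apply Finset.card_lt_card
  rw [Finset.ssubset_iff_of_subset]
  · refine ⟨rep j, Finset.mem_image.2 ⟨j, Finset.mem_Iio.2 h, rfl⟩, ?_⟩
    intro hc
    obtain ⟨j', hj', hj'2⟩ := Finset.mem_image.1 hc
    rw [Finset.mem_Iio] at hj'
    exact fo_min rep hj' hj'2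
  · apply Finset.image_subset_image
    intro l hl
    rw [Finset.mem_Iio] at hl ⊢
    exact lt_of_lt_of_le hl ((fo_le rep j).trans (le_of_lt h))

lemma canon_eq_iff (rep : Fin m → α) (i j : Fin m) :
    canon rep i = canon rep j ↔ rep i = rep j := by
  constructor
  · intro h
    by_contra hne
    rcases lt_trichotomy (fo rep i) (fo rep j) with hlt | heq | hlt
    · have h2 : fo rep i < fo rep (fo rep j) := by rwa [fo_fo]
      have := canon_strict rep h2
      rw [canon_fo, canon_fo] at this
      omega
    · exact hne ((rep_fo rep i).symm.trans (heq ▸ rep_fo rep j))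
    · have h2 : fo rep j < fo rep (fo rep i) := by rwa [fo_fo]
      have := canon_strict rep h2
      rw [canon_fo, canon_fo] at this
      omega
  · intro h
    unfold canon
    rw [fo_congr rep h]

/-- The set of first occurrences below `fo rep i` maps bijectively to values -/
lemma canon_rgs (rep : Fin m → α) : RGS (canon rep) := by
  intro i v hv
  set m0 := fo rep i with hm0
  set F := (Finset.Iio m0).filter (fun j => fo rep j = j) with hF
  have himg : F.image rep = (Finset.Iio m0).image rep := by
    apply Finset.Subset.antisymm (Finset.image_subset_image (Finset.filter_subset _ _))
    intro a ha
    obtain ⟨j, hj, rfl⟩ := Finset.mem_image.1 ha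
    rw [Finset.mem_Iio] at hj
    refine Finset.mem_image.2 ⟨fo rep j, ?_, rep_fo rep j⟩
    simp only [Finset.mem_filter, Finset.mem_Iio]
    exact ⟨lt_of_le_of_lt (fo_le rep j) hj, fo_fo rep j⟩
  have hrep_inj : Set.InjOn rep F := by
    intro a ha b hb hab
    rw [hF, Finset.mem_coe, Finset.mem_filter] at ha hb
    rw [← ha.2, ← hb.2]
    exact fo_congr rep hab
  have hcardF : F.card = canon rep i := by
    rw [canon, ← hm0, ← himg, Finset.card_image_of_injOn hrep_inj]
  have hcanon_inj : Set.InjOn (canon rep) F := by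
    intro a ha b hb hab
    rw [hF, Finset.mem_coe, Finset.mem_filter] at ha hb
    rw [← ha.2, ← hb.2]
    exact fo_congr rep ((canon_eq_iff rep a b).1 hab)
  have himg2 : F.image (canon rep) = Finset.range (canon rep i) := by
    apply Finset.eq_of_subset_of_card_le
    · intro v hv2
      obtain ⟨j, hj, rfl⟩ := Finset.mem_image.1 hv2
      rw [hF, Finset.mem_filter, Finset.mem_Iio] at hj
      rw [Finset.mem_range]
      exact canon_strict rep hj.1
    · rw [Finset.card_range, ← hcardF]
      exact le_of_eq (Finset.card_image_of_injOn hcanon_inj).symm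
  have hvF : v ∈ F.image (canon rep) := by
    rw [himg2, Finset.mem_range]; exact hv
  obtain ⟨j, hj, hjv⟩ := Finset.mem_image.1 hvF
  rw [hF, Finset.mem_filter, Finset.mem_Iio] at hj
  exact ⟨j, lt_of_lt_of_le hj.1 (fo_le rep i), hjv⟩

lemma canon_nv (rep : Fin m → α) :
    (Finset.univ.image (canon rep)).card = (Finset.univ.image rep).card := by
  set F := Finset.univ.filter (fun j : Fin m => fo rep j = j) with hF
  have h1 : Finset.univ.image (canon rep) = F.image (canon rep) := by
    apply Finset.Subset.antisymm
    · intro v hv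
      obtain ⟨j, _, rfl⟩ := Finset.mem_image.1 hv
      refine Finset.mem_image.2 ⟨fo rep j, ?_, canon_fo rep j⟩
      rw [hF, Finset.mem_filter]
      exact ⟨Finset.mem_univ _, fo_fo rep j⟩
    · exact Finset.image_subset_image (Finset.filter_subset _ _)
  have h2 : Finset.univ.image rep = F.image rep := by
    apply Finset.Subset.antisymm
    · intro v hv
      obtain ⟨j, _, rfl⟩ := Finset.mem_image.1 hv
      refine Finset.mem_image.2 ⟨fo rep j, ?_, rep_fo rep j⟩
      rw [hF, Finset.mem_filter]
      exact ⟨Finset.mem_univ _, fo_fo rep j⟩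
    · exact Finset.image_subset_image (Finset.filter_subset _ _)
  have hrep_inj : Set.InjOn rep F := by
    intro a ha b hb hab
    rw [hF, Finset.mem_coe, Finset.mem_filter] at ha hb
    rw [← ha.2, ← hb.2]
    exact fo_congr rep hab
  have hcanon_inj : Set.InjOn (canon rep) F := by
    intro a ha b hb hab
    rw [hF, Finset.mem_coe, Finset.mem_filter] at ha hb
    rw [← ha.2, ← hb.2]
    exact fo_congr rep ((canon_eq_iff rep a b).1 hab)
  rw [h1, h2, Finset.card_image_of_injOn hcanon_inj, Finset.card_image_of_injOn hrep_inj]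

lemma canon_zero (rep : Fin (m+1) → α) : canon rep 0 = 0 := by
  have h0 : fo rep 0 = 0 := le_antisymm (by simpa using fo_le rep 0) (Fin.zero_le _)
  rw [canon, h0]
  have : Finset.Iio (0 : Fin (m+1)) = ∅ := by
    ext j; simp [Fin.not_lt_zero]
  rw [this]
  simp

/-! ### quadratic form evaluations for PSD matrices -/

variable {n : ℕ}

lemma quad2 {X : Matrix (Fin n) (Fin n) ℝ} (hpsd : X.PosSemidef) (i j : Fin n) :
    0 ≤ X i i - X i j - X j i + X j j := by
  set x : Fin n → ℝ := Pi.single i 1 - Pi.single j 1 with hx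
  have h := hpsd.dotProduct_mulVec_nonneg x
  have hstar : star x = x := by
    funext a
    rw [Pi.star_apply]
    exact star_trivial _
  rw [hstar, hx] at h
  simp only [Matrix.mulVec_sub, Matrix.mulVec_single, sub_dotProduct, single_dotProduct,
    Pi.sub_apply, mul_one, one_mul, MulOpposite.op_one, one_smul, Matrix.col_apply] at h
  linarith

lemma quad3 {X : Matrix (Fin n) (Fin n) ℝ} (hpsd : X.PosSemidef) (i j k : Fin n) :
    0 ≤ X i i - X i j + X i k - X j i + X j j - X j k + X k i - X k j + X k k := by
  set x : Fin n → ℝ := Pi.single i 1 - Pi.single j 1 + Pi.single k 1 with hx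
  have h := hpsd.dotProduct_mulVec_nonneg x
  have hstar : star x = x := by
    funext a
    rw [Pi.star_apply]
    exact star_trivial _
  rw [hstar, hx] at h
  simp only [Matrix.mulVec_add, Matrix.mulVec_sub, Matrix.mulVec_single,
    add_dotProduct, sub_dotProduct, single_dotProduct,
    Pi.add_apply, Pi.sub_apply, mul_one, one_mul, MulOpposite.op_one, one_smul, Matrix.col_apply] at h
  linarith

section Entries

variable {X : Matrix (Fin n) (Fin n) ℝ}
  (hsym : X.IsSymm) (h01 : ∀ i j, X i j = 0 ∨ X i j = 1) (hpsd : X.PosSemidef)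

include hsym h01 hpsd in
lemma row_zero (k : Fin n) (hd : X k k = 0) (j : Fin n) : X k j = 0 := by
  rcases h01 k j with h | h
  · exact h
  exfalso
  have h' : X j k = 1 := by rw [hsym.apply k j]; exact h
  have := quad2 hpsd k j
  rcases h01 j j with hjj | hjj <;> rw [hd, h, h', hjj] at this <;> linarith

include hsym h01 hpsd in
lemma diag_one {k j : Fin n} (h : X k j = 1) : X k k = 1 := by
  rcases h01 k k with hd | hd
  · rw [row_zero hsym h01 hpsd k hd j] at h
    norm_num at h
  · exact hd

include hsym h01 hpsd in
lemma col_diag_one {k j : Fin n} (h : X k j = 1) : X j j = 1 := by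
  apply diag_one hsym h01 hpsd (j := k)
  rw [hsym.apply k j]
  exact h

include hsym h01 hpsd in
lemma trans_one {i j k : Fin n} (hij : X i j = 1) (hjk : X j k = 1) : X i k = 1 := by
  by_cases hik : i = k
  · subst hik
    exact diag_one hsym h01 hpsd hij
  by_cases hij' : i = j
  · subst hij'; exact hjk
  by_cases hjk' : j = k
  · subst hjk'; exact hij
  rcases h01 i k with h | h
  · exfalso
    have hii : X i i = 1 := diag_one hsym h01 hpsd hij
    have hjj : X j j = 1 := diag_one hsym h01 hpsd hjk
    have hkk : X k k = 1 := col_diag_one hsym h01 hpsd hjk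
    have hji : X j i = 1 := by rw [hsym.apply i j]; exact hij
    have hkj : X k j = 1 := by rw [hsym.apply j k]; exact hjk
    have hki : X k i = X i k := hsym.apply i k
    have := quad3 hpsd i j k
    rw [hii, hjj, hkk, hij, hji, hjk, hkj, h, hki, h] at this
    linarith
  · exact h

end Entries

/-! ### the matrix associated to a labeling -/

def matrixOf (f : Fin (n + 1) → ℕ) : Matrix (Fin n) (Fin n) ℝ :=
  Matrix.of fun i j => if f i.succ = f j.succ ∧ f i.succ ≠ 0 then 1 else 0

lemma matrixOf_apply (f : Fin (n + 1) → ℕ) (i j : Fin n) :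
    matrixOf f i j = if f i.succ = f j.succ ∧ f i.succ ≠ 0 then 1 else 0 := rfl

lemma matrixOf_eq_one_iff {f : Fin (n + 1) → ℕ} {i j : Fin n} :
    matrixOf f i j = 1 ↔ (f i.succ = f j.succ ∧ f i.succ ≠ 0) := by
  rw [matrixOf_apply]
  split_ifs with h
  · simpa using h
  · simpa using h

lemma matrixOf_isSymm (f : Fin (n + 1) → ℕ) : (matrixOf f).IsSymm := by
  ext i j
  rw [Matrix.transpose_apply, matrixOf_apply, matrixOf_apply]
  by_cases h : f i.succ = f j.succ
  · rw [h]
  · rw [if_neg (fun hc => h hc.1.symm), if_neg (fun hc => h hc.1)]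

lemma matrixOf_01 (f : Fin (n + 1) → ℕ) (i j : Fin n) :
    matrixOf f i j = 0 ∨ matrixOf f i j = 1 := by
  rw [matrixOf_apply]
  split_ifs <;> simp

/-- nonzero values of f -/
def Vals (f : Fin (n + 1) → ℕ) : Finset ℕ := (Finset.univ.image f).erase 0

/-- block indicator matrix -/
noncomputable def Dmat (f : Fin (n + 1) → ℕ) : Matrix (Vals f) (Fin n) ℝ :=
  Matrix.of fun v i => if f i.succ = (v : ℕ) then 1 else 0

lemma matrixOf_factor (f : Fin (n + 1) → ℕ) : matrixOf f = (Dmat f)ᵀ * (Dmat f) := by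
  ext i j
  rw [Matrix.mul_apply, matrixOf_apply]
  simp only [Matrix.transpose_apply, Dmat, Matrix.of_apply]
  rw [eq_comm]
  by_cases h : f i.succ = 0
  · rw [if_neg (fun hc => hc.2 h)]
    apply Finset.sum_eq_zero
    intro v _
    have hv : (v : ℕ) ≠ 0 := Finset.ne_of_mem_erase v.2
    rw [if_neg (fun hc => hv (h ▸ hc.symm)), zero_mul]
  · have hmem : f i.succ ∈ Vals f :=
      Finset.mem_erase.2 ⟨h, Finset.mem_image_of_mem f (Finset.mem_univ _)⟩
    rw [Finset.sum_eq_single (⟨f i.succ, hmem⟩ : Vals f)]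
    · show (if f i.succ = f i.succ then (1:ℝ) else 0) * (if f j.succ = f i.succ then 1 else 0)
        = if f i.succ = f j.succ ∧ f i.succ ≠ 0 then 1 else 0
      rw [if_pos rfl, one_mul]
      by_cases h2 : f i.succ = f j.succ
      · rw [if_pos h2.symm, if_pos ⟨h2, h⟩]
      · rw [if_neg (fun hc => h2 hc.symm), if_neg (fun hc => h2 hc.1)]
    · intro v _ hv
      rw [if_neg, zero_mul]
      intro hc
      exact hv (Subtype.ext hc.symm)
    · intro hc
      exact absurd (Finset.mem_univ _) hc

lemma matrixOf_posSemidef (f : Fin (n + 1) → ℕ) : (matrixOf f).PosSemidef := by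
  rw [matrixOf_factor f]
  have hct : (Dmat f)ᴴ = (Dmat f)ᵀ := by
    ext i j
    simp [Matrix.conjTranspose_apply]
  rw [← hct]
  exact Matrix.posSemidef_conjTranspose_mul_self (Dmat f)



lemma rgs_zero' {m : ℕ} {f : Fin (m + 1) → ℕ} (hf : RGS f) : f 0 = 0 := by
  by_contra hc
  obtain ⟨j, hj, -⟩ := hf 0 0 (Nat.pos_of_ne_zero hc)
  exact absurd hj (by simp [Fin.not_lt_zero, Fin.le_zero_iff])

lemma block_nonempty {f : Fin (n + 1) → ℕ} (hf : RGS f) (v : Vals f) :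
    (Finset.univ.filter (fun i : Fin n => f i.succ = (v : ℕ))).Nonempty := by
  have hv0 : (v : ℕ) ≠ 0 := Finset.ne_of_mem_erase v.2
  have hvim : (v : ℕ) ∈ Finset.univ.image f := Finset.mem_of_mem_erase v.2
  obtain ⟨j, -, hj⟩ := Finset.mem_image.1 hvim
  have hj0 : j ≠ 0 := by
    intro hc
    rw [hc, rgs_zero' hf] at hj
    exact hv0 hj.symm
  refine ⟨(j.pred hj0), ?_⟩
  rw [Finset.mem_filter]
  exact ⟨Finset.mem_univ _, by rw [Fin.succ_pred]; exact hj⟩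

lemma Dmat_mul_transpose {f : Fin (n + 1) → ℕ} :
    Dmat f * (Dmat f)ᵀ = Matrix.diagonal (fun v : Vals f =>
      ((Finset.univ.filter (fun i : Fin n => f i.succ = (v : ℕ))).card : ℝ)) := by
  ext u v
  rw [Matrix.mul_apply]
  simp only [Matrix.transpose_apply, Dmat, Matrix.of_apply]
  by_cases huv : u = v
  · subst huv
    rw [Matrix.diagonal_apply_eq]
    have hcg : ∀ i : Fin n, i ∈ Finset.univ → ((if f i.succ = (u:ℕ) then (1:ℝ) else 0) *
        (if f i.succ = (u:ℕ) then 1 else 0)) = if f i.succ = (u:ℕ) then 1 else 0 :=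
      fun i _ => by split_ifs <;> ring
    rw [Finset.sum_congr rfl hcg, Finset.sum_boole]
  · rw [Matrix.diagonal_apply_ne _ huv]
    apply Finset.sum_eq_zero
    intro i _
    by_cases hi : f i.succ = (u : ℕ)
    · have hv : f i.succ ≠ (v : ℕ) := fun hc => huv (Subtype.ext (hi.symm.trans hc))
      rw [if_neg hv, mul_zero]
    · rw [if_neg hi, zero_mul]

lemma matrixOf_rank {f : Fin (n + 1) → ℕ} (hf : RGS f) :
    (matrixOf f).rank = (Vals f).card := by
  rw [matrixOf_factor f, Matrix.rank_transpose_mul_self]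
  apply le_antisymm
  · exact (Matrix.rank_le_card_height (Dmat f)).trans (le_of_eq (Fintype.card_coe _))
  · have h1 := Matrix.rank_mul_le_left (Dmat f) (Dmat f)ᵀ
    rw [Dmat_mul_transpose] at h1
    rw [Matrix.rank_diagonal] at h1
    refine le_trans (le_of_eq ?_) h1
    rw [← Fintype.card_coe (Vals f)]
    exact Fintype.card_congr (Equiv.subtypeUnivEquiv (fun v =>
      Nat.cast_ne_zero.2 (Finset.card_pos.2 (block_nonempty hf v)).ne')).symm


lemma nv_eq_vals {f : Fin (n + 1) → ℕ} (hf : RGS f) : nv f = (Vals f).card + 1 := by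
  have h0 : (0 : ℕ) ∈ Finset.univ.image f := by
    refine Finset.mem_image.2 ⟨0, Finset.mem_univ _, rgs_zero' hf⟩
  rw [nv, Vals, Finset.card_erase_of_mem h0]
  have : 1 ≤ (Finset.univ.image f).card := Finset.card_pos.2 ⟨0, h0⟩
  omega


lemma dc_range' (s : Finset ℕ) (h : ∀ a ∈ s, ∀ b < a, b ∈ s) :
    s = Finset.range s.card := by
  have hsub : s ⊆ Finset.range s.card := by
    intro a ha
    rw [Finset.mem_range]
    have : Finset.range (a + 1) ⊆ s := by
      intro b hb
      rw [Finset.mem_range, Nat.lt_succ_iff] at hb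
      rcases lt_or_eq_of_le hb with hb | hb
      · exact h a ha b hb
      · rwa [hb]
    have := Finset.card_le_card this
    simpa using this
  exact Finset.eq_of_subset_of_card_le hsub (by simp)

lemma rgs_new {m : ℕ} {f : Fin m → ℕ} (hf : RGS f) {i : Fin m}
    (hnew : ∀ j, j < i → f j ≠ f i) :
    f i = ((Finset.Iio i).image f).card := by
  set s := (Finset.Iio i).image f with hs
  have hdc : ∀ a ∈ s, ∀ b < a, b ∈ s := by
    intro a ha b hb
    obtain ⟨j, hj, rfl⟩ := Finset.mem_image.1 ha
    rw [Finset.mem_Iio] at hj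
    obtain ⟨j', hj', hj'2⟩ := hf j b hb
    exact Finset.mem_image.2 ⟨j', Finset.mem_Iio.2 (lt_trans hj' hj), hj'2⟩
  have hrange := dc_range' s hdc
  have hsub : Finset.range (f i) ⊆ s := by
    intro v hv
    rw [Finset.mem_range] at hv
    obtain ⟨j, hj, hjv⟩ := hf i v hv
    exact Finset.mem_image.2 ⟨j, Finset.mem_Iio.2 hj, hjv⟩
  have hle : f i ≤ s.card := by simpa using Finset.card_le_card hsub
  have hni : f i ∉ s := by
    intro hc
    obtain ⟨j, hj, hjv⟩ := Finset.mem_image.1 hc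
    exact hnew j (Finset.mem_Iio.1 hj) hjv
  rcases lt_or_eq_of_le hle with hlt | heq
  · exfalso
    apply hni
    rw [hrange, Finset.mem_range]
    exact hlt
  · exact heq

lemma matrixOf_inj {f f' : Fin (n + 1) → ℕ} (hf : RGS f) (hf' : RGS f')
    (hX : matrixOf f = matrixOf f') : f = f' := by
  have key : ∀ N : ℕ, ∀ i : Fin (n + 1), (i : ℕ) ≤ N → f i = f' i := by
    intro N
    induction N with
    | zero =>
      intro i hi
      have : i = 0 := Fin.ext (Nat.le_zero.1 hi)
      subst this
      rw [rgs_zero' hf, rgs_zero' hf']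
    | succ N ih =>
      intro i hi
      by_cases hiN : (i : ℕ) ≤ N
      · exact ih i hiN
      have hi0 : i ≠ 0 := by
        intro hc
        rw [hc] at hiN
        exact hiN (Nat.zero_le N)
      obtain ⟨k, rfl⟩ : ∃ k : Fin n, i = k.succ := ⟨i.pred hi0, (Fin.succ_pred i hi0).symm⟩
      have hdiagE := congrFun (congrFun hX k) k
      rw [matrixOf_apply, matrixOf_apply] at hdiagE
      have hdiag : f k.succ = 0 ↔ f' k.succ = 0 := by
        constructor
        · intro h0
          by_contra h0'
          rw [if_neg (fun hc => hc.2 h0), if_pos ⟨rfl, h0'⟩] at hdiagE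
          norm_num at hdiagE
        · intro h0
          by_contra h0'
          rw [if_pos ⟨rfl, h0'⟩, if_neg (fun hc => hc.2 h0)] at hdiagE
          norm_num at hdiagE
      by_cases h0 : f k.succ = 0
      · rw [h0, hdiag.1 h0]
      have h0' : f' k.succ ≠ 0 := fun hc => h0 (hdiag.2 hc)
      have hent : ∀ l : Fin n, (f l.succ = f k.succ ∧ f l.succ ≠ 0) ↔
          (f' l.succ = f' k.succ ∧ f' l.succ ≠ 0) := by
        intro l
        have e := congrFun (congrFun hX l) k
        constructor
        · intro hcond
          exact matrixOf_eq_one_iff.1 (e ▸ matrixOf_eq_one_iff.2 hcond)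
        · intro hcond
          exact matrixOf_eq_one_iff.1 (e ▸ matrixOf_eq_one_iff.2 hcond)
      by_cases hex : ∃ j : Fin (n + 1), j < k.succ ∧ f j = f k.succ
      · obtain ⟨j, hj, hjf⟩ := hex
        have hjN : (j : ℕ) ≤ N := by
          have h1 := Fin.lt_def.1 hj
          omega
        have hj0 : j ≠ 0 := by
          intro hc
          rw [hc, rgs_zero' hf] at hjf
          exact h0 hjf.symm
        obtain ⟨l, rfl⟩ : ∃ l : Fin n, j = l.succ := ⟨j.pred hj0, (Fin.succ_pred j hj0).symm⟩
        have h1 : f' l.succ = f' k.succ := ((hent l).1 ⟨hjf, by rw [hjf]; exact h0⟩).1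
        rw [← hjf, ih l.succ hjN]
        exact h1
      · have hnewf : ∀ j, j < k.succ → f j ≠ f k.succ := fun j hj hc => hex ⟨j, hj, hc⟩
        have hnewf' : ∀ j, j < k.succ → f' j ≠ f' k.succ := by
          intro j hj hc
          have hjN : (j : ℕ) ≤ N := by
            have h1 := Fin.lt_def.1 hj
            omega
          have hj0 : j ≠ 0 := by
            intro h0c
            rw [h0c, rgs_zero' hf'] at hc
            exact h0' hc.symm
          obtain ⟨l, rfl⟩ : ∃ l : Fin n, j = l.succ := ⟨j.pred hj0, (Fin.succ_pred j hj0).symm⟩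
          have hl := ((hent l).2 ⟨hc, by rw [hc]; exact h0'⟩).1
          exact hnewf l.succ hj hl
        have hval : f k.succ = ((Finset.Iio k.succ).image f).card := rgs_new hf hnewf
        have hval' : f' k.succ = ((Finset.Iio k.succ).image f').card := rgs_new hf' hnewf'
        have himg : (Finset.Iio k.succ).image f = (Finset.Iio k.succ).image f' := by
          apply Finset.image_congr
          intro j hj
          rw [Finset.mem_coe, Finset.mem_Iio] at hj
          apply ih
          have h1 := Fin.lt_def.1 hj
          omega
        rw [hval, hval', himg]
  funext i
  exact key (n + 1) i (by omega)

/-! ### surjectivity: every matrix in the set comes from an RGS -/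

lemma exists_rgs_matrixOf {n : ℕ} {X : Matrix (Fin n) (Fin n) ℝ}
    (hsym : X.IsSymm) (h01 : ∀ i j, X i j = 0 ∨ X i j = 1) (hpsd : X.PosSemidef) :
    ∃ f : Fin (n + 1) → ℕ, RGS f ∧ matrixOf f = X := by
  classical
  set rep : Fin (n + 1) → Finset (Fin n) :=
    fun i => Fin.cases ∅ (fun k => Finset.univ.filter (fun j => X k j = 1)) i with hrep
  have hrep0 : rep 0 = ∅ := rfl
  have hreps : ∀ k : Fin n, rep k.succ = Finset.univ.filter (fun j => X k j = 1) :=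
    fun k => by simp [hrep]
  have hXiff : ∀ k l : Fin n, X k l = 1 ↔ (rep k.succ = rep l.succ ∧ rep k.succ ≠ ∅) := by
    intro k l
    constructor
    · intro h
      have hkk : X k k = 1 := diag_one hsym h01 hpsd h
      refine ⟨?_, ?_⟩
      · rw [hreps, hreps]
        ext j
        simp only [Finset.mem_filter, Finset.mem_univ, true_and]
        constructor
        · intro hkj
          exact trans_one hsym h01 hpsd (by rw [hsym.apply k l]; exact h) hkj
        · intro hlj
          exact trans_one hsym h01 hpsd h hlj
      · apply Finset.ne_empty_of_mem (a := k)
        rw [hreps]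
        simp [hkk]
    · rintro ⟨heq, hne⟩
      have hkk : X k k = 1 := by
        rw [hreps] at hne
        obtain ⟨j, hj⟩ := Finset.nonempty_iff_ne_empty.2 hne
        rw [Finset.mem_filter] at hj
        exact diag_one hsym h01 hpsd hj.2
      have hk_mem : k ∈ rep l.succ := by
        rw [← heq, hreps]
        simp [hkk]
      rw [hreps, Finset.mem_filter] at hk_mem
      rw [hsym.apply l k]
      exact hk_mem.2
  set f := canon rep with hf
  have hrgs : RGS f := canon_rgs rep
  refine ⟨f, hrgs, ?_⟩
  have hcond : ∀ k l : Fin n, (f k.succ = f l.succ ∧ f k.succ ≠ 0) ↔ X k l = 1 := by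
    intro k l
    rw [hXiff k l]
    have h1 : f k.succ = f l.succ ↔ rep k.succ = rep l.succ := canon_eq_iff rep _ _
    have h2 : f k.succ = 0 ↔ rep k.succ = ∅ := by
      rw [hf]
      constructor
      · intro h
        have : canon rep k.succ = canon rep 0 := by rw [h, canon_zero]
        rw [(canon_eq_iff rep _ _).1 this, hrep0]
      · intro h
        have : rep k.succ = rep 0 := by rw [h, hrep0]
        rw [(canon_eq_iff rep _ _).2 this]
        exact canon_zero rep
    constructor
    · rintro ⟨ha, hb⟩
      exact ⟨h1.1 ha, fun hc => hb (h2.2 hc)⟩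
    · rintro ⟨ha, hb⟩
      exact ⟨h1.2 ha, fun hc => hb (h2.1 hc)⟩
  ext k l
  rw [matrixOf_apply]
  by_cases hx : X k l = 1
  · rw [if_pos ((hcond k l).2 hx), hx]
  · rw [if_neg (fun hc => hx ((hcond k l).1 hc))]
    rcases h01 k l with h | h
    · rw [h]
    · exact absurd h hx

/-! ### counting -/

def Mset (n r : ℕ) : Set (Matrix (Fin n) (Fin n) ℝ) :=
  {X | X.IsSymm ∧ (∀ i j, X i j = 0 ∨ X i j = 1) ∧ X.PosSemidef ∧ X.rank ≤ r}

def Tset (n r : ℕ) : Set (Fin (n + 1) → ℕ) := {f | RGS f ∧ nv f ≤ r + 1}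

lemma nv_pos {m : ℕ} (f : Fin (m + 1) → ℕ) : 1 ≤ nv f :=
  Finset.card_pos.2 ⟨f 0, Finset.mem_image_of_mem f (Finset.mem_univ _)⟩

lemma Mset_eq_image (n r : ℕ) : Mset n r = matrixOf '' Tset n r := by
  ext X
  constructor
  · intro hX
    obtain ⟨f, hrgs, hfX⟩ := exists_rgs_matrixOf hX.1 hX.2.1 hX.2.2.1
    refine ⟨f, ⟨hrgs, ?_⟩, hfX⟩
    have h1 : (matrixOf f).rank = (Vals f).card := matrixOf_rank hrgs
    rw [hfX] at h1
    have h2 := nv_eq_vals hrgs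
    have h3 := hX.2.2.2
    omega
  · rintro ⟨f, ⟨hrgs, hnv⟩, rfl⟩
    refine ⟨matrixOf_isSymm f, matrixOf_01 f, matrixOf_posSemidef f, ?_⟩
    rw [matrixOf_rank hrgs]
    have := nv_eq_vals hrgs
    omega

lemma tset_finite (n r : ℕ) : (Tset n r).Finite := by
  apply Set.Finite.subset (Set.Finite.pi (fun i : Fin (n + 1) => Set.finite_Iic (i : ℕ)))
  intro f hf
  simp only [Set.mem_pi, Set.mem_univ, Set.mem_Iic, forall_true_left]
  exact fun i => rgs_le hf.1 i

lemma card_Tset (n r : ℕ) :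
    (Tset n r).ncard = ∑ k ∈ Finset.Icc 1 (r + 1), stirlingSnd (n + 1) k := by
  induction r with
  | zero =>
    have h : Tset n 0 = Sset (n + 1) 1 := by
      ext f
      simp only [Tset, Sset, Set.mem_setOf_eq]
      constructor
      · rintro ⟨h1, h2⟩
        exact ⟨h1, le_antisymm h2 (nv_pos f)⟩
      · rintro ⟨h1, h2⟩
        exact ⟨h1, le_of_eq h2⟩
    rw [h, card_sset]
    simp
  | succ r ih =>
    have hunion : Tset n (r + 1) = Tset n r ∪ Sset (n + 1) (r + 2) := by
      ext f
      simp only [Tset, Sset, Set.mem_setOf_eq, Set.mem_union]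
      constructor
      · rintro ⟨h1, h2⟩
        by_cases h3 : nv f ≤ r + 1
        · exact Or.inl ⟨h1, h3⟩
        · exact Or.inr ⟨h1, by omega⟩
      · rintro (⟨h1, h2⟩ | ⟨h1, h2⟩)
        · exact ⟨h1, by omega⟩
        · exact ⟨h1, by omega⟩
    have hdisj : Disjoint (Tset n r) (Sset (n + 1) (r + 2)) := by
      rw [Set.disjoint_left]
      intro f hf hf2
      have h1 := hf.2
      have h2 := hf2.2
      omega
    rw [hunion, Set.ncard_union_eq hdisj (tset_finite n r) (sset_finite _ _), ih, card_sset,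
      Finset.sum_Icc_succ_top (by omega : 1 ≤ r + 2)]

lemma card_Mset (n r : ℕ) :
    (Mset n r).ncard = ∑ k ∈ Finset.Icc 1 (r + 1), stirlingSnd (n + 1) k := by
  rw [Mset_eq_image, Set.ncard_image_of_injOn, card_Tset]
  intro f hf f' hf' h
  exact matrixOf_inj hf.1 hf'.1 h

lemma stirling_zero_right (m : ℕ) : stirlingSnd (m + 1) 0 = 0 := rfl

lemma pow_two_eq (n : ℕ) : stirlingSnd (n + 1) 1 + stirlingSnd (n + 1) 2 = 2 ^ n := by
  induction n with
  | zero => rfl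
  | succ n ih =>
    have h1 : stirlingSnd (n + 2) 1 = 1 * stirlingSnd (n + 1) 1 + stirlingSnd (n + 1) 0 := rfl
    have h2 : stirlingSnd (n + 2) 2 = 2 * stirlingSnd (n + 1) 2 + stirlingSnd (n + 1) 1 := rfl
    rw [h1, h2, stirling_zero_right, pow_succ]
    omega

lemma bell_eq (n : ℕ) :
    bellNumber (n + 1) = ∑ k ∈ Finset.Icc 1 (n + 1), stirlingSnd (n + 1) k := by
  rw [bellNumber, Finset.sum_range_succ']
  rw [stirling_zero_right, add_zero]
  rw [← Finset.Ico_add_one_right_eq_Icc, Finset.sum_Ico_eq_sum_range]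
  apply Finset.sum_congr rfl
  intro i _
  rw [Nat.add_comm 1 i]

end SM

/-- For `n ≥ 1` and `0 ≤ r ≤ n`, the number of symmetric PSD `{0,1}` matrices of order `n`
with rank at most `r` equals `Σ_{k=1}^{r+1} S(n+1, k)`.  In particular, for rank at most `1`
this number is `2 ^ n`, and the total number of PSD `{0,1}` matrices of order `n` is the
Bell number `B_{n+1}`. -/
theorem stmt5 (n r : ℕ) (hn : 1 ≤ n) (hr : r ≤ n) :
    Set.ncard {X : Matrix (Fin n) (Fin n) ℝ | X.IsSymm ∧ (∀ i j, X i j = 0 ∨ X i j = 1) ∧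
        X.PosSemidef ∧ X.rank ≤ r} = ∑ k ∈ Finset.Icc 1 (r + 1), stirlingSnd (n + 1) k ∧
    Set.ncard {X : Matrix (Fin n) (Fin n) ℝ | X.IsSymm ∧ (∀ i j, X i j = 0 ∨ X i j = 1) ∧
        X.PosSemidef ∧ X.rank ≤ 1} = 2 ^ n ∧
    Set.ncard {X : Matrix (Fin n) (Fin n) ℝ | X.IsSymm ∧ (∀ i j, X i j = 0 ∨ X i j = 1) ∧
        X.PosSemidef} = bellNumber (n + 1) := by
  refine ⟨SM.card_Mset n r, ?_, ?_⟩
  · refine (SM.card_Mset n 1).trans ?_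
    rw [show Finset.Icc 1 2 = ({1, 2} : Finset ℕ) from rfl,
      Finset.sum_insert (by simp), Finset.sum_singleton]
    exact SM.pow_two_eq n
  · have hset : {X : Matrix (Fin n) (Fin n) ℝ | X.IsSymm ∧ (∀ i j, X i j = 0 ∨ X i j = 1) ∧
        X.PosSemidef} = SM.Mset n n := by
      ext X
      simp only [SM.Mset, Set.mem_setOf_eq]
      constructor
      · rintro ⟨h1, h2, h3⟩
        refine ⟨h1, h2, h3, ?_⟩
        exact (Matrix.rank_le_card_width X).trans (by simp)
      · rintro ⟨h1, h2, h3, -⟩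
        exact ⟨h1, h2, h3⟩
    rw [hset, SM.card_Mset n n, SM.bell_eq]
end

section
/- Let X be a symmetric n×n real matrix with all entries in {−1, 0, 1}. Then X is PSD if and only if there exist a nonnegative integer r and vectors x₁,…,x_r ∈ {−1, 0, 1}ⁿ such that X = Σ_{j=1}^{r} x_j x_jᵀ. -/
open Matrix

section Aux

variable {n : ℕ}

open scoped Classical in
/-- canonical representative: minimum of the support of row `k`. -/
noncomputable def repAux (X : Matrix (Fin n) (Fin n) ℝ) (k : Fin n) : Fin n :=
  if h : (Finset.univ.filter fun j => X k j ≠ 0).Nonempty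
  then (Finset.univ.filter fun j => X k j ≠ 0).min' h else k

lemma psd_vecMulVec (x : Fin n → ℝ) : (vecMulVec x x).PosSemidef := by
  apply Matrix.PosSemidef.of_dotProduct_mulVec_nonneg
  · ext i j
    simp [vecMulVec_apply, conjTranspose_apply, mul_comm]
  · intro y
    have h1 : vecMulVec x x *ᵥ y = (x ⬝ᵥ y) • x := by
      ext i
      simp [mulVec, vecMulVec_apply, dotProduct, Finset.mul_sum, mul_assoc, mul_comm,
        mul_left_comm]
    rw [h1]
    simp only [star_trivial, dotProduct_smul, smul_eq_mul]
    rw [dotProduct_comm]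
    exact mul_self_nonneg _

variable {X : Matrix (Fin n) (Fin n) ℝ}

lemma quadform (hX : X.PosSemidef) (i j k : Fin n) (a b c : ℝ) :
    0 ≤ a^2 * X i i + b^2 * X j j + c^2 * X k k
      + a*b*X i j + a*b*X j i + a*c*X i k + a*c*X k i + b*c*X j k + b*c*X k j := by
  have h := hX.dotProduct_mulVec_nonneg (a • (Pi.single i 1 : Fin n → ℝ) + b • (Pi.single j 1 : Fin n → ℝ)
    + c • (Pi.single k 1 : Fin n → ℝ))
  simp only [star_trivial, mulVec_add, mulVec_smul, dotProduct_add, add_dotProduct,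
    dotProduct_smul, smul_dotProduct, mulVec_single, dotProduct_single, single_dotProduct,
    smul_eq_mul, mul_one, Matrix.col_apply, MulOpposite.op_one, one_smul, one_mul] at h
  nlinarith [h]

lemma diag01 (hX : X.PosSemidef)
    (hter : ∀ i j, X i j = -1 ∨ X i j = 0 ∨ X i j = 1) (i : Fin n) :
    X i i = 0 ∨ X i i = 1 := by
  have h := quadform hX i i i 1 0 0
  rcases hter i i with h' | h' | h' <;> simp [h'] at h ⊢
  linarith

lemma row_zero (hX : X.PosSemidef) (hsym : X.IsSymm)
    (hter : ∀ i j, X i j = -1 ∨ X i j = 0 ∨ X i j = 1) {i : Fin n}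
    (hi : X i i = 0) (j : Fin n) : X i j = 0 := by
  have hji : X j i = X i j := hsym.apply j i ▸ rfl
  have h := quadform hX i j j (-(X i j)) 1 0
  rcases hter j j with h' | h' | h' <;>
    rcases hter i j with h'' | h'' | h'' <;>
      simp [h', h'', hi, hji] at h ⊢ <;> nlinarith [h]

lemma transfact (hX : X.PosSemidef) (hsym : X.IsSymm)
    (hter : ∀ i j, X i j = -1 ∨ X i j = 0 ∨ X i j = 1) {i j k : Fin n}
    (hij : X i j ≠ 0) (hjk : X j k ≠ 0) : X i k = X i j * X j k := by
  have hii : X i i = 1 := by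
    rcases diag01 hX hter i with h | h
    · exact absurd (row_zero hX hsym hter h j) hij
    · exact h
  have hji : X j i = X i j := hsym.apply j i ▸ rfl
  have hkj : X k j = X j k := hsym.apply k j ▸ rfl
  have hki : X k i = X i k := hsym.apply k i ▸ rfl
  have hjj : X j j = 1 := by
    rcases diag01 hX hter j with h | h
    · exact absurd (row_zero hX hsym hter h k) hjk
    · exact h
  have hkk : X k k = 1 := by
    rcases diag01 hX hter k with h | h
    · exact absurd ((hkj ▸ row_zero hX hsym hter h j)) hjk
    · exact h
  have hs2 : X i j ^ 2 = 1 := by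
    rcases hter i j with h | h | h
    · rw [h]; ring
    · exact absurd h hij
    · rw [h]; ring
  have ht2 : X j k ^ 2 = 1 := by
    rcases hter j k with h | h | h
    · rw [h]; ring
    · exact absurd h hjk
    · rw [h]; ring
  have h := quadform hX i j k 1 (-(X i j)) (X i j * X j k - X i k)
  rw [hii, hjj, hkk, hji, hkj, hki] at h
  nlinarith [h, sq_nonneg (X i j * X j k - X i k), hs2, ht2]

lemma supp_eq (hX : X.PosSemidef) (hsym : X.IsSymm)
    (hter : ∀ i j, X i j = -1 ∨ X i j = 0 ∨ X i j = 1) {k j : Fin n}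
    (hkj : X k j ≠ 0) (l : Fin n) : X j l ≠ 0 ↔ X k l ≠ 0 := by
  have hjk : X j k ≠ 0 := by
    have : X j k = X k j := hsym.apply j k ▸ rfl
    rw [this]; exact hkj
  constructor
  · intro h
    rw [transfact hX hsym hter hkj h]
    exact mul_ne_zero hkj h
  · intro h
    rw [transfact hX hsym hter hjk h]
    exact mul_ne_zero hjk h

lemma rep_mem (hkk : X k k ≠ 0) : X k (repAux X k) ≠ 0 := by
  classical
  have hne : (Finset.univ.filter fun j => X k j ≠ 0).Nonempty :=
    ⟨k, by simp [hkk]⟩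
  have := Finset.min'_mem _ hne
  rw [Finset.mem_filter] at this
  rw [repAux]
  convert this.2 using 3 <;> simp [hne]

lemma rep_eq (hX : X.PosSemidef) (hsym : X.IsSymm)
    (hter : ∀ i j, X i j = -1 ∨ X i j = 0 ∨ X i j = 1) {k j : Fin n}
    (hkj : X k j ≠ 0) : repAux X j = repAux X k := by
  classical
  have hfe : (Finset.univ.filter fun l => X j l ≠ 0)
      = (Finset.univ.filter fun l => X k l ≠ 0) := by
    ext l
    simp [supp_eq hX hsym hter hkj l]
  have hne : (Finset.univ.filter fun l => X k l ≠ 0).Nonempty := ⟨j, by simp [hkj]⟩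
  rw [repAux, repAux, hfe, dif_pos hne, dif_pos hne]

end Aux

/-- A symmetric `{−1,0,1}` matrix `X` is PSD iff it is a sum `Σ_{j=1}^{r} x_j x_jᵀ`
of rank-one matrices with `x_j ∈ {−1,0,1}ⁿ`. -/
theorem stmt9 (n : ℕ) (X : Matrix (Fin n) (Fin n) ℝ) (hsym : X.IsSymm)
    (hter : ∀ i j, X i j = -1 ∨ X i j = 0 ∨ X i j = 1) :
    X.PosSemidef ↔
      ∃ (r : ℕ) (xs : Fin r → Fin n → ℝ),
        (∀ j i, xs j i = -1 ∨ xs j i = 0 ∨ xs j i = 1) ∧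
        X = ∑ j : Fin r, Matrix.vecMulVec (xs j) (xs j) := by
  classical
  constructor
  · intro hX
    refine ⟨n, fun i m => if X m m = 1 ∧ repAux X m = i then X m (repAux X m) else 0, ?_, ?_⟩
    · intro i m
      dsimp only
      by_cases h : X m m = 1 ∧ repAux X m = i
      · rw [if_pos h]
        exact hter m (repAux X m)
      · rw [if_neg h]
        right; left; rfl
    · ext k l
      rw [Matrix.sum_apply]
      simp only [vecMulVec_apply]
      by_cases hk1 : X k k = 1
      · by_cases hl1 : X l l = 1
        · have hkrep : X k (repAux X k) ≠ 0 := rep_mem (by rw [hk1]; norm_num)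
          have hlrep : X l (repAux X l) ≠ 0 := rep_mem (by rw [hl1]; norm_num)
          rw [Finset.sum_eq_single (repAux X k)]
          · by_cases hrr : repAux X l = repAux X k
            · rw [if_pos ⟨hk1, rfl⟩, if_pos ⟨hl1, hrr⟩]
              have h1 : X k l = X k (repAux X k) * X (repAux X k) l := by
                apply transfact hX hsym hter hkrep
                rw [hsym.apply l (repAux X k), ← hrr]
                exact hlrep
              have h2 : X (repAux X k) l = X l (repAux X l) := by
                rw [hsym.apply l (repAux X k), hrr]
              rw [h1, h2]
            · have hkl : X k l = 0 := by
                by_contra h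
                exact hrr (rep_eq hX hsym hter h)
              simp [hkl, hrr]
          · intro i _ hi
            simp [Ne.symm hi]
          · simp
        · have hl0 : X l l = 0 := (diag01 hX hter l).resolve_right hl1
          have hkl : X k l = 0 := by
            rw [hsym.apply l k]
            exact row_zero hX hsym hter hl0 k
          simp [hkl, hl1]
      · have hk0 : X k k = 0 := (diag01 hX hter k).resolve_right hk1
        have hkl : X k l = 0 := row_zero hX hsym hter hk0 l
        simp [hkl, hk1]
  · rintro ⟨r, xs, -, rfl⟩
    exact Finset.sum_induction _ (fun A : Matrix (Fin n) (Fin n) ℝ => A.PosSemidef)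
      (fun A B hA hB => hA.add hB)
      Matrix.PosSemidef.zero (fun j _ => psd_vecMulVec (xs j))
end

section
/- Let x ∈ {−1, 0, 1}ⁿ and let X be a symmetric n×n real matrix such that supp(diag(X)) = supp(x), i.e., X_{ii} ≠ 0 if and only if x_i ≠ 0. Let Y be the (n+1)×(n+1) block matrix with top-left 1×1 block equal to 1, top-right block xᵀ, bottom-left block x, and bottom-right block X. Then Y has all entries in {−1, 0, 1} and is PSD if and only if X = xxᵀ. -/
open Matrix

section aux
variable {n : ℕ} (x : Fin n → ℝ) (X : Matrix (Fin n) (Fin n) ℝ)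

def tv (i : Fin n) : (Fin 1 ⊕ Fin n) → ℝ := Sum.elim (fun _ => -x i) (Pi.single i 1)

def uv (i : Fin n) : (Fin 1 ⊕ Fin n) → ℝ := Sum.elim 0 (Pi.single i 1)

lemma mulVec_tv (i j : Fin n) :
    ((liftedBlock x X) *ᵥ tv x i) (Sum.inr j) = x j * (-x i) + X j i := by
  simp [liftedBlock, tv, mulVec, dotProduct, Fintype.sum_sum_type, Pi.single_apply,
    mul_ite]

lemma quad_tv (i : Fin n) :
    star (tv x i) ⬝ᵥ (liftedBlock x X) *ᵥ tv x i = X i i - x i * x i := by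
  simp [liftedBlock, tv, mulVec, dotProduct, Fintype.sum_sum_type, Pi.single_apply,
    mul_ite]
  ring

lemma mulVec_uv (i j : Fin n) :
    ((liftedBlock x X) *ᵥ uv i) (Sum.inr j) = X j i := by
  simp [liftedBlock, uv, mulVec, dotProduct, Fintype.sum_sum_type, Pi.single_apply,
    mul_ite]

lemma quad_uv (i : Fin n) :
    star (uv i) ⬝ᵥ (liftedBlock x X) *ᵥ uv i = X i i := by
  simp [liftedBlock, uv, mulVec, dotProduct, Fintype.sum_sum_type, Pi.single_apply,
    mul_ite]

end aux

/-- Let `x ∈ {−1,0,1}ⁿ` and let `X` be symmetric with `supp(diag X) = supp(x)`.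
Then the block matrix `Y = [[1, xᵀ], [x, X]]` has all entries in `{−1,0,1}` and is PSD
iff `X = x xᵀ`. -/
theorem stmt10 (n : ℕ) (x : Fin n → ℝ) (hx : ∀ i, x i = -1 ∨ x i = 0 ∨ x i = 1)
    (X : Matrix (Fin n) (Fin n) ℝ) (hsym : X.IsSymm)
    (hsupp : ∀ i, X i i ≠ 0 ↔ x i ≠ 0) :
    ((∀ a b, liftedBlock x X a b = -1 ∨ liftedBlock x X a b = 0 ∨ liftedBlock x X a b = 1) ∧
        (liftedBlock x X).PosSemidef) ↔
      X = Matrix.vecMulVec x x := by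
  constructor
  · rintro ⟨hent, hpsd⟩
    have hdiag : ∀ i, X i i = x i * x i := by
      intro i
      by_cases h0 : x i = 0
      · have : X i i = 0 := by
          by_contra h
          exact (hsupp i).mp h h0
        rw [this, h0, mul_zero]
      · have hxi2 : x i * x i = 1 := by
          rcases hx i with h | h | h <;> simp [h] at h0 ⊢
        have h1 : (0:ℝ) ≤ X i i - x i * x i := by
          have := (posSemidef_iff_dotProduct_mulVec.mp hpsd).2 (tv x i)
          rwa [quad_tv] at this
        have h2 : X i i ≤ 1 := by
          have he := hent (Sum.inr i) (Sum.inr i)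
          simp only [liftedBlock, fromBlocks_apply₂₂] at he
          rcases he with h | h | h <;> linarith
        linarith
    ext i j
    rw [vecMulVec_apply]
    by_cases hj : x j = 0
    · have hz : star (uv j) ⬝ᵥ (liftedBlock x X) *ᵥ uv j = 0 := by
        rw [quad_uv, hdiag j, hj, mul_zero]
      have hmv := (hpsd.dotProduct_mulVec_zero_iff _).mp hz
      have h3 := congrFun hmv (Sum.inr i)
      rw [mulVec_uv] at h3
      simp only [Pi.zero_apply] at h3
      rw [h3, hj, mul_zero]
    · have hz : star (tv x j) ⬝ᵥ (liftedBlock x X) *ᵥ tv x j = 0 := by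
        rw [quad_tv, hdiag j]; ring
      have hmv := (hpsd.dotProduct_mulVec_zero_iff _).mp hz
      have h3 := congrFun hmv (Sum.inr i)
      rw [mulVec_tv] at h3
      simp only [Pi.zero_apply] at h3
      linear_combination h3
  · intro h
    subst h
    set y : Fin 1 ⊕ Fin n → ℝ := Sum.elim 1 x with hy
    have hY : liftedBlock x (Matrix.vecMulVec x x) = Matrix.vecMulVec y y := by
      ext (a | a) (b | b) <;> simp [liftedBlock, vecMulVec_apply, hy]
    constructor
    · intro a b
      rw [hY]
      rcases a with a | a <;> rcases b with b | b <;>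
        simp only [vecMulVec_apply, hy, Sum.elim_inl, Sum.elim_inr, Pi.one_apply, one_mul,
          mul_one]
      · norm_num
      · exact hx b
      · exact hx a
      · rcases hx a with h | h | h <;> rcases hx b with h' | h' | h' <;> rw [h, h'] <;> norm_num
    · rw [hY, vecMulVec_eq (Fin 1) y y]
      have hr : replicateRow (Fin 1) y = (replicateCol (Fin 1) y)ᴴ := by
        rw [conjTranspose_replicateCol]
        simp
      rw [hr]
      exact posSemidef_self_mul_conjTranspose _
end

section
/- Let n, m, p be positive integers, let Q₀, Q₁,…,Q_m be symmetric n×n real matrices, c₀, c₁,…,c_m ∈ ℝⁿ, d ∈ ℝ^m, a₁,…,a_p ∈ ℝⁿ and b ∈ ℝ^p. Call x ∈ {0,1}ⁿ QCQP-feasible if xᵀQ_i x + c_iᵀx ≤ d_i for all i ∈ {1,…,m} and a_iᵀx = b_i for all i ∈ {1,…,p}. Call a pair (x, X) with x ∈ {0,1}ⁿ and X a symmetric n×n real matrix BSDP-feasible if ⟨Q_i, X⟩ + c_iᵀx ≤ d_i for all i ∈ {1,…,m}, a_iᵀx = b_i for all i ∈ {1,…,p}, diag(X) = x, and the block matrix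 with top-left entry 1, top-right block xᵀ, bottom-left block x and bottom-right block X is PSD. Then: (a) if x is QCQP-feasible, then (x, xxᵀ) is BSDP-feasible and ⟨Q₀, xxᵀ⟩ + c₀ᵀx = xᵀQ₀x + c₀ᵀx; (b) if (x, X) is BSDP-feasible, then X = xxᵀ and x is QCQP-feasible, so ⟨Q₀, X⟩ + c₀ᵀx = xᵀQ₀x + c₀ᵀx. In particular, the two programs have the same set of attained objective values and the same optimal value. -/
open Matrix

/-- Feasibility for the binary quadratically constrained quadratic program:
`x ∈ {0,1}ⁿ`, `xᵀ Q_i x + c_iᵀ x ≤ d_i` for `i ∈ [m]`, and `a_iᵀ x = b_i` for `i ∈ [p]`. -/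
def QCQPfeasible {n : ℕ} (m p : ℕ) (Qs : Fin m → Matrix (Fin n) (Fin n) ℝ)
    (cs : Fin m → Fin n → ℝ) (d : Fin m → ℝ) (a : Fin p → Fin n → ℝ) (b : Fin p → ℝ)
    (x : Fin n → ℝ) : Prop :=
  (∀ i, x i = 0 ∨ x i = 1) ∧
  (∀ i : Fin m, x ⬝ᵥ (Qs i).mulVec x + cs i ⬝ᵥ x ≤ d i) ∧
  (∀ i : Fin p, a i ⬝ᵥ x = b i)

/-- Feasibility for the corresponding binary semidefinite program:
`x ∈ {0,1}ⁿ`, `X` symmetric, `⟨Q_i, X⟩ + c_iᵀ x ≤ d_i`, `a_iᵀ x = b_i`, `diag X = x`, and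
the block matrix `[[1, xᵀ], [x, X]]` is PSD. -/
def BSDPfeasible {n : ℕ} (m p : ℕ) (Qs : Fin m → Matrix (Fin n) (Fin n) ℝ)
    (cs : Fin m → Fin n → ℝ) (d : Fin m → ℝ) (a : Fin p → Fin n → ℝ) (b : Fin p → ℝ)
    (x : Fin n → ℝ) (X : Matrix (Fin n) (Fin n) ℝ) : Prop :=
  (∀ i, x i = 0 ∨ x i = 1) ∧ X.IsSymm ∧
  (∀ i : Fin m, ((Qs i)ᵀ * X).trace + cs i ⬝ᵥ x ≤ d i) ∧
  (∀ i : Fin p, a i ⬝ᵥ x = b i) ∧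
  X.diag = x ∧ (liftedBlock x X).PosSemidef

lemma trace_aux {n : ℕ} (Q : Matrix (Fin n) (Fin n) ℝ) (x y : Fin n → ℝ) :
    (Qᵀ * Matrix.vecMulVec x y).trace = x ⬝ᵥ Q.mulVec y := by
  simp only [Matrix.trace, Matrix.diag, Matrix.mul_apply, Matrix.transpose_apply,
    Matrix.vecMulVec_apply, Matrix.mulVec, dotProduct, Finset.mul_sum]
  rw [Finset.sum_comm]
  apply Finset.sum_congr rfl; intro k _; apply Finset.sum_congr rfl; intro i _; ring

lemma quadBlock {n : ℕ} (x : Fin n → ℝ) (X : Matrix (Fin n) (Fin n) ℝ) (α : ℝ) (z : Fin n → ℝ) :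
    (Sum.elim (fun _ => α) z) ⬝ᵥ (liftedBlock x X) *ᵥ (Sum.elim (fun _ => α) z)
      = α * α + α * (x ⬝ᵥ z) + (z ⬝ᵥ x) * α + z ⬝ᵥ X *ᵥ z := by
  show ((fun (_ : Fin 1) => α) ⊕ᵥ z) ⬝ᵥ (liftedBlock x X) *ᵥ ((fun (_ : Fin 1) => α) ⊕ᵥ z) = _
  rw [liftedBlock, Matrix.fromBlocks_mulVec, sumElim_dotProduct_sumElim]
  simp [mulVec, dotProduct, Finset.mul_sum, Finset.sum_mul, mul_add, add_mul,
    Finset.sum_add_distrib, mul_comm, mul_left_comm]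
  ring

lemma dot_two {n : ℕ} {i j : Fin n} (hij : i ≠ j) (t : ℝ) (g : Fin n → ℝ) :
    g ⬝ᵥ (fun k => if k = i then 1 else if k = j then t else 0) = g i + t * g j := by
  have h : ∀ k, g k * (if k = i then (1:ℝ) else if k = j then t else 0) =
      (if k = i then g i else 0) + (if k = j then t * g j else 0) := by
    intro k
    by_cases h1 : k = i
    · subst h1; simp [hij]
    · by_cases h2 : k = j
      · subst h2; simp [h1]; ring
      · simp [h1, h2]
  simp only [dotProduct, h, Finset.sum_add_distrib, Finset.sum_ite_eq' Finset.univ,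
    Finset.mem_univ, if_true]

lemma psd_vecMulVec_s11 {k : Type*} [Fintype k] [DecidableEq k] (v : k → ℝ) :
    (Matrix.vecMulVec v v).PosSemidef := by
  have h := Matrix.posSemidef_conjTranspose_mul_self (Matrix.replicateRow Unit v)
  rwa [Matrix.conjTranspose_replicateRow, star_trivial, ← Matrix.vecMulVec_eq] at h

lemma liftedBlock_vecMulVec {n : ℕ} (x : Fin n → ℝ) :
    liftedBlock x (Matrix.vecMulVec x x)
      = Matrix.vecMulVec (Sum.elim (fun _ => 1) x) (Sum.elim (fun _ => 1) x) := by
  ext i j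
  rcases i with i | i <;> rcases j with j | j <;>
    simp [liftedBlock, Matrix.vecMulVec_apply]

/-- Key rigidity lemma: for a BSDP-feasible pair, `X = x xᵀ`. -/
lemma bsdp_X_eq {n : ℕ} {x : Fin n → ℝ} {X : Matrix (Fin n) (Fin n) ℝ}
    (hbin : ∀ i, x i = 0 ∨ x i = 1) (hsymm : X.IsSymm)
    (hdiag : X.diag = x) (hpsd : (liftedBlock x X).PosSemidef) :
    X = Matrix.vecMulVec x x := by
  have hsq : ∀ i, x i * x i = x i := fun i => by rcases hbin i with h | h <;> rw [h] <;> ring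
  have hd : ∀ i, X i i = x i := fun i => congrFun hdiag i
  ext i j
  rw [Matrix.vecMulVec_apply]
  by_cases hij : i = j
  · subst hij; rw [hd i, hsq i]
  · have hXsym : X j i = X i j := (congrFun (congrFun hsymm j) i).symm.trans (Matrix.transpose_apply X j i)
    have key : ∀ t : ℝ, 0 ≤ 2 * t * (X i j - x i * x j) := by
      intro t
      have h := hpsd.dotProduct_mulVec_nonneg (Sum.elim (fun _ => -(x i + t * x j))
        (fun k => if k = i then 1 else if k = j then t else 0))
      rw [star_trivial, quadBlock] at h
      have e1 : x ⬝ᵥ (fun k => if k = i then (1:ℝ) else if k = j then t else 0)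
          = x i + t * x j := dot_two hij t x
      have e2 : (fun k => if k = i then (1:ℝ) else if k = j then t else 0) ⬝ᵥ x
          = x i + t * x j := by rw [dotProduct_comm]; exact e1
      have e3 : (fun k => if k = i then (1:ℝ) else if k = j then t else 0) ⬝ᵥ
          X *ᵥ (fun k => if k = i then (1:ℝ) else if k = j then t else 0)
          = (X i i + t * X i j) + t * (X j i + t * X j j) := by
        rw [dotProduct_comm, dot_two hij]
        have m1 : (X *ᵥ fun k => if k = i then (1:ℝ) else if k = j then t else 0) i
            = X i i + t * X i j := dot_two hij t (X i)
        have m2 : (X *ᵥ fun k => if k = i then (1:ℝ) else if k = j then t else 0) j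
            = X j i + t * X j j := dot_two hij t (X j)
        rw [m1, m2]
      rw [e1, e2, e3, hd i, hd j, hXsym] at h
      have hh : -(x i + t * x j) * -(x i + t * x j) + -(x i + t * x j) * (x i + t * x j) +
          (x i + t * x j) * -(x i + t * x j) + (x i + t * X i j + t * (X i j + t * x j))
          = 2 * t * (X i j - x i * x j) := by
        linear_combination (-1 : ℝ) * hsq i + (-(t ^ 2)) * hsq j
      rw [hh] at h
      exact h
    have k1 := key 1
    have k2 := key (-1)
    linarith

/-- Equivalence of the binary QCQP and its BSDP reformulation:
(a) a QCQP-feasible `x` yields the BSDP-feasible pair `(x, xxᵀ)` with the same objective;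
(b) a BSDP-feasible pair `(x, X)` satisfies `X = xxᵀ` and `x` is QCQP-feasible;
consequently, the two programs attain the same objective values and optimal value. -/
theorem stmt11 (n m p : ℕ) (hn : 0 < n) (hm : 0 < m) (hp : 0 < p)
    (Q0 : Matrix (Fin n) (Fin n) ℝ) (hQ0 : Q0.IsSymm)
    (Qs : Fin m → Matrix (Fin n) (Fin n) ℝ) (hQs : ∀ i, (Qs i).IsSymm)
    (c0 : Fin n → ℝ) (cs : Fin m → Fin n → ℝ) (d : Fin m → ℝ)
    (a : Fin p → Fin n → ℝ) (b : Fin p → ℝ) :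
    (∀ x : Fin n → ℝ, QCQPfeasible m p Qs cs d a b x →
      BSDPfeasible m p Qs cs d a b x (Matrix.vecMulVec x x) ∧
      (Q0ᵀ * Matrix.vecMulVec x x).trace + c0 ⬝ᵥ x = x ⬝ᵥ Q0.mulVec x + c0 ⬝ᵥ x) ∧
    (∀ (x : Fin n → ℝ) (X : Matrix (Fin n) (Fin n) ℝ), BSDPfeasible m p Qs cs d a b x X →
      X = Matrix.vecMulVec x x ∧ QCQPfeasible m p Qs cs d a b x ∧
      (Q0ᵀ * X).trace + c0 ⬝ᵥ x = x ⬝ᵥ Q0.mulVec x + c0 ⬝ᵥ x) ∧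
    ({v : ℝ | ∃ x, QCQPfeasible m p Qs cs d a b x ∧ v = x ⬝ᵥ Q0.mulVec x + c0 ⬝ᵥ x} =
      {v : ℝ | ∃ x X, BSDPfeasible m p Qs cs d a b x X ∧ v = (Q0ᵀ * X).trace + c0 ⬝ᵥ x}) ∧
    sInf {v : ℝ | ∃ x, QCQPfeasible m p Qs cs d a b x ∧ v = x ⬝ᵥ Q0.mulVec x + c0 ⬝ᵥ x} =
      sInf {v : ℝ | ∃ x X, BSDPfeasible m p Qs cs d a b x X ∧
        v = (Q0ᵀ * X).trace + c0 ⬝ᵥ x} := by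
  have parta : ∀ x : Fin n → ℝ, QCQPfeasible m p Qs cs d a b x →
      BSDPfeasible m p Qs cs d a b x (Matrix.vecMulVec x x) ∧
      (Q0ᵀ * Matrix.vecMulVec x x).trace + c0 ⬝ᵥ x = x ⬝ᵥ Q0.mulVec x + c0 ⬝ᵥ x := by
    intro x hx
    obtain ⟨hbin, hineq, heqc⟩ := hx
    have hsq : ∀ i, x i * x i = x i := fun i => by rcases hbin i with h | h <;> rw [h] <;> ring
    refine ⟨⟨hbin, ?_, ?_, heqc, ?_, ?_⟩, ?_⟩
    · rw [Matrix.IsSymm]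
      ext i j
      rw [Matrix.transpose_apply, Matrix.vecMulVec_apply, Matrix.vecMulVec_apply, mul_comm]
    · intro i; rw [trace_aux]; exact hineq i
    · ext i; rw [Matrix.diag_apply, Matrix.vecMulVec_apply, hsq]
    · rw [liftedBlock_vecMulVec]; exact psd_vecMulVec_s11 _
    · rw [trace_aux]
  have partb : ∀ (x : Fin n → ℝ) (X : Matrix (Fin n) (Fin n) ℝ),
      BSDPfeasible m p Qs cs d a b x X →
      X = Matrix.vecMulVec x x ∧ QCQPfeasible m p Qs cs d a b x ∧
      (Q0ᵀ * X).trace + c0 ⬝ᵥ x = x ⬝ᵥ Q0.mulVec x + c0 ⬝ᵥ x := by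
    intro x X hX
    obtain ⟨hbin, hsymm, hineq, heqc, hdiag, hpsd⟩ := hX
    have hXeq : X = Matrix.vecMulVec x x := bsdp_X_eq hbin hsymm hdiag hpsd
    refine ⟨hXeq, ⟨hbin, ?_, heqc⟩, ?_⟩
    · intro i; have := hineq i; rwa [hXeq, trace_aux] at this
    · rw [hXeq, trace_aux]
  have hsets : {v : ℝ | ∃ x, QCQPfeasible m p Qs cs d a b x ∧
        v = x ⬝ᵥ Q0.mulVec x + c0 ⬝ᵥ x} =
      {v : ℝ | ∃ x X, BSDPfeasible m p Qs cs d a b x X ∧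
        v = (Q0ᵀ * X).trace + c0 ⬝ᵥ x} := by
    ext v
    simp only [Set.mem_setOf_eq]
    constructor
    · rintro ⟨x, hx, rfl⟩
      exact ⟨x, Matrix.vecMulVec x x, (parta x hx).1, ((parta x hx).2).symm⟩
    · rintro ⟨x, X, hX, rfl⟩
      obtain ⟨_, hq, heq⟩ := partb x X hX
      exact ⟨x, hq, heq⟩
  exact ⟨parta, partb, hsets, by rw [hsets]⟩
end
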